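/- arXiv:math/0309107 — 6 statements merged into one kernel-verified Lean document; each statement's English description precedes it below -/
import Mathlib

section
/- Let κ₁, κ₂ ∈ ℂ with κ₁ ∉ I(E_{κ₁}) and κ₂ ∉ I(E_{κ₂}). Then there exists a bijection Φ : I(E_{κ₁}) → I(E_{κ₂}) such that Φ(E_{κ₁}(z)) = E_{κ₂}(Φ(z)) and |E_{κ₁}ⁿ(z) − E_{κ₂}ⁿ(Φ(z))| → 0 as n → ∞, for every z ∈ I(E_{κ₁}). -/
open Filter Topology ENNReal

noncomputable section

/-- The space of external addresses: integer sequences (indexed from 0, so index `k`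
corresponds to the entry `s_{k+1}` of the paper) with the lexicographic order. -/
abbrev Addr : Type := Lex (ℕ → ℤ)

/-- The shift map `σ` on external addresses. -/
def shiftA (s : Addr) : Addr := toLex (fun n => ofLex s (n + 1))

/-- The model growth function `F(t) = e^t - 1`. -/
def Fexp (t : ℝ) : ℝ := Real.exp t - 1

/-- The model map `𝓕(s,t) = (σ s, F t - 2π |s₂|)`. -/
def Fmod (p : Addr × ℝ) : Addr × ℝ :=
  (shiftA p.1, Fexp p.2 - 2 * Real.pi * |((ofLex p.1 1 : ℤ) : ℝ)|)

/-- The model set `X̄ = {(s,t) : T(𝓕ⁿ(s,t)) ≥ 0 for all n ≥ 0}`. -/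
def Xbar : Set (Addr × ℝ) := {p | ∀ n : ℕ, 0 ≤ (Fmod^[n] p).2}

/-- The model escaping set `X = {(s,t) ∈ X̄ : T(𝓕ⁿ(s,t)) → ∞}`. -/
def Xset : Set (Addr × ℝ) :=
  {p | p ∈ Xbar ∧ Tendsto (fun n : ℕ => (Fmod^[n] p).2) atTop atTop}

/-- The minimal potential `t_s ∈ [0,∞]` of an address (`∞` if `(s,t) ∉ X̄` for all `t ≥ 0`). -/
def tS (s : Addr) : ℝ≥0∞ :=
  sInf (ENNReal.ofReal '' {t : ℝ | 0 ≤ t ∧ (s, t) ∈ Xbar})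

/-- The exponential map `E_κ(z) = e^z + κ`. -/
def Eexp (κ : ℂ) (z : ℂ) : ℂ := Complex.exp z + κ

/-- The escaping set `I(E_κ)`. -/
def escapingSet (κ : ℂ) : Set ℂ :=
  {z | Tendsto (fun n : ℕ => ‖(Eexp κ)^[n] z‖) atTop atTop}

/-- The order topology induced by the lexicographic order on external addresses. -/
instance : TopologicalSpace Addr := Preorder.topology Addr
instance : OrderTopology Addr := ⟨rfl⟩

/-!
Label each point by the horizontal strip of height `2π` containing it (`stripIndex`); the labels
along an orbit form its itinerary. `Φ z` is the unique escaping point of `E_{κ₂}` whose orbit is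
asymptotic to that of `z` and has the same itinerary.

Existence: far to the right, `E_{κ₂}` has inverse branches close to those of `E_{κ₁}`, so pulling a
tail of the orbit of `z` back along it and passing to a limit gives an asymptotic orbit. Escaping
orbits eventually stay within `π / 2` of the centre lines of the strips, so asymptotic orbits
eventually have the same labels; finitely many pullbacks with prescribed labels, possible since
no escaping point equals the non-escaping `κ₂`, then fix the whole itinerary.

Uniqueness: near escaping orbits `E_κ` does not contract, so asymptotic orbits of the same map
eventually coincide, and a point is determined by an iterate together with the labels before it.
The construction is symmetric in `κ₁, κ₂`, giving surjectivity, and commutes with the dynamics.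
-/

open Real

def stripIndex (z : ℂ) : ℤ := round (z.im / (2 * π))

theorem stripIndex_add_int_mul_two_pi_I (z : ℂ) (n : ℤ) :
    stripIndex (z + n * (2 * π * Complex.I)) = stripIndex z + n := by
  have hπ : 2 * π ≠ 0 := by positivity
  have him : (z + n * (2 * π * Complex.I)).im = z.im + n * (2 * π) := by simp
  rw [stripIndex, stripIndex, him, add_div, mul_div_cancel_right₀ _ hπ, round_add_intCast]

theorem eq_of_exp_eq_of_stripIndex_eq {u v : ℂ} (h : Complex.exp u = Complex.exp v)
    (hs : stripIndex u = stripIndex v) : u = v := by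
  obtain ⟨n, rfl⟩ := Complex.exp_eq_exp_iff_exists_int.mp h
  rw [stripIndex_add_int_mul_two_pi_I] at hs
  obtain rfl : n = 0 := by omega
  simp

theorem stripIndex_eq_of_re_exp_pos {x y : ℂ} (hx : 0 < (Complex.exp x).re)
    (hxy : ‖x - y‖ < π / 2) : stripIndex x = stripIndex y := by
  have hπ : 0 < 2 * π := by positivity
  set n := stripIndex x
  set θ := x.im - n * (2 * π)
  have hθ : |θ| ≤ π := by
    have h : |x.im / (2 * π) - n| ≤ 1 / 2 := abs_sub_round _
    have hθ : θ = (x.im / (2 * π) - n) * (2 * π) := by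
      simp only [θ, sub_mul, div_mul_cancel₀ _ hπ.ne']
    rw [hθ, abs_mul, abs_of_pos hπ]
    nlinarith [abs_nonneg (x.im / (2 * π) - n)]
  -- `Re (exp x) > 0` keeps `x` at distance `< π / 2` from the centre line of its strip
  have hθ' : |θ| < π / 2 := by
    have hcos : 0 < Real.cos |θ| := by
      rw [Real.cos_abs, Real.cos_sub_int_mul_two_pi]
      rw [Complex.exp_re] at hx
      exact pos_of_mul_pos_right hx (Real.exp_pos _).le
    by_contra! h
    exact (Real.cos_nonpos_of_pi_div_two_le_of_le h (by linarith)).not_gt hcos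
  have hy : |x.im - y.im| < π / 2 := by
    simpa using (Complex.abs_im_le_norm (x - y)).trans_lt hxy
  symm
  rw [stripIndex, round_eq_iff, Set.mem_Ico, le_div_iff₀ hπ, div_lt_iff₀ hπ]
  constructor <;> linarith [abs_lt.mp hθ', abs_lt.mp hy]

theorem exists_eexp_eq_stripIndex_eq {κ v : ℂ} (hv : v ≠ κ) (n : ℤ) :
    ∃ u, Eexp κ u = v ∧ stripIndex u = n := by
  set u₀ := Complex.log (v - κ)
  refine ⟨u₀ + ((n - stripIndex u₀ : ℤ) : ℂ) * (2 * π * Complex.I), ?_, ?_⟩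
  · rw [Eexp, Complex.exp_add, Complex.exp_int_mul_two_pi_mul_I, mul_one,
      Complex.exp_log (sub_ne_zero.mpr hv), sub_add_cancel]
  · rw [stripIndex_add_int_mul_two_pi_I]
    omega

theorem eq_of_eexp_eq_of_stripIndex_eq {κ u v : ℂ} (h : Eexp κ u = Eexp κ v)
    (hs : stripIndex u = stripIndex v) : u = v :=
  eq_of_exp_eq_of_stripIndex_eq (add_right_cancel h) hs

theorem eq_of_iterate_eq_of_itinerary_eq {α β : Type*} {f : α → α} {ℓ : α → β}
    (hf : ∀ a b, f a = f b → ℓ a = ℓ b → a = b) {m : ℕ} {a b : α} (h : f^[m] a = f^[m] b)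
    (hℓ : ∀ k < m, ℓ (f^[k] a) = ℓ (f^[k] b)) : a = b := by
  induction m generalizing a b with
  | zero => exact h
  | succ m ih =>
    refine hf a b (ih h fun k hk => ?_) (hℓ 0 m.succ_pos)
    simpa only [← Function.iterate_succ_apply] using hℓ (k + 1) (by omega)

theorem exists_forall_dist_iterate_le {X : Type*} [PseudoMetricSpace X] [ProperSpace X]
    {f : X → X} (hf : Continuous f) {Z : ℕ → X} {δ : ℕ → ℝ} (hδ : ∀ k, 0 ≤ δ k)
    (hpull : ∀ k ζ, dist ζ (Z (k + 1)) ≤ δ (k + 1) → ∃ ξ, f ξ = ζ ∧ dist ξ (Z k) ≤ δ k) :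
    ∃ w, ∀ k, dist (f^[k] w) (Z k) ≤ δ k := by
  have hfin : ∀ m k, ∃ ξ, ∀ j ≤ m, dist (f^[j] ξ) (Z (k + j)) ≤ δ (k + j) := by
    intro m
    induction m with
    | zero =>
      exact fun k => ⟨Z k, fun j hj => by obtain rfl := Nat.le_zero.1 hj; simpa using hδ k⟩
    | succ m ih =>
      intro k
      obtain ⟨ξ', hξ'⟩ := ih (k + 1)
      obtain ⟨ξ, rfl, hξ⟩ := hpull k ξ' (by simpa using hξ' 0 m.zero_le)
      refine ⟨ξ, fun j hj => ?_⟩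
      cases j with
      | zero => simpa using hξ
      | succ j =>
        rw [Function.iterate_succ_apply, show k + (j + 1) = k + 1 + j by omega]
        exact hξ' j (by omega)
  -- a limit of the finite-time pullbacks shadows `Z` forever
  choose ξ hξ using fun m => hfin m 0
  obtain ⟨w, -, φ, hφ, hlim⟩ := (isCompact_closedBall (Z 0) (δ 0)).tendsto_subseq
    fun m => by simpa using hξ m 0 m.zero_le
  refine ⟨w, fun k => ?_⟩
  have := Metric.isClosed_closedBall.mem_of_tendsto (((hf.iterate k).tendsto w).comp hlim)
    ((hφ.tendsto_atTop.eventually_ge_atTop k).mono fun i hi => by simpa using hξ (φ i) k hi)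
  simpa using this

theorem exists_exp_eq_add_of_norm_le {z a : ℂ} {r : ℝ} (ha : ‖a‖ ≤ r)
    (hr : r * Real.exp (-z.re) ≤ 1 / 2) :
    ∃ ξ, Complex.exp ξ = Complex.exp z + a ∧ ‖ξ - z‖ ≤ 2 * r * Real.exp (-z.re) := by
  set ε := a * Complex.exp (-z)
  have hε : ‖ε‖ ≤ r * Real.exp (-z.re) := by
    rw [norm_mul, Complex.norm_exp, Complex.neg_re]
    gcongr
  have hε' : ‖ε‖ ≤ 1 / 2 := hε.trans hr
  have hne : 1 + ε ≠ 0 := by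
    intro h
    rw [eq_neg_of_add_eq_zero_right h, norm_neg, norm_one] at hε'
    norm_num at hε'
  refine ⟨z + Complex.log (1 + ε), ?_, ?_⟩
  · rw [Complex.exp_add, Complex.exp_log hne, mul_add, mul_one, mul_left_comm, ← Complex.exp_add,
      add_neg_cancel, Complex.exp_zero, mul_one]
  · rw [add_sub_cancel_left]
    linarith [Complex.norm_log_one_add_half_le_self hε', norm_nonneg ε]

section Escaping

variable {κ κ₁ κ₂ κ₃ z w u v : ℂ}

theorem eexp_mem_escapingSet_iff : Eexp κ z ∈ escapingSet κ ↔ z ∈ escapingSet κ :=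
  tendsto_add_atTop_iff_nat (f := fun n => ‖(Eexp κ)^[n] z‖) 1

theorem iterate_mem_escapingSet_iff (m : ℕ) :
    (Eexp κ)^[m] z ∈ escapingSet κ ↔ z ∈ escapingSet κ := by
  induction m with
  | zero => rfl
  | succ m ih => rw [Function.iterate_succ_apply', eexp_mem_escapingSet_iff, ih]

theorem tendsto_re_iterate_of_mem_escapingSet (hz : z ∈ escapingSet κ) :
    Tendsto (fun n : ℕ => ((Eexp κ)^[n] z).re) atTop atTop := by
  have hre : ∀ n, ((Eexp κ)^[n] z).re = Real.log ‖(Eexp κ)^[n + 1] z - κ‖ := fun n => by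
    rw [Function.iterate_succ_apply', Eexp, add_sub_cancel_right, Complex.norm_exp, Real.log_exp]
  simp_rw [hre]
  refine Real.tendsto_log_atTop.comp (tendsto_atTop_mono (fun n => norm_sub_norm_le _ _) ?_)
  exact tendsto_atTop_add_const_right _ _ ((tendsto_add_atTop_iff_nat 1).2 hz)

theorem tendsto_exp_neg_re_iterate_of_mem_escapingSet (hz : z ∈ escapingSet κ) :
    Tendsto (fun n : ℕ => Real.exp (-((Eexp κ)^[n] z).re)) atTop (𝓝 0) :=
  Real.tendsto_exp_neg_atTop_nhds_zero.comp (tendsto_re_iterate_of_mem_escapingSet hz)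

def Asymptotic (κ₁ κ₂ z w : ℂ) : Prop :=
  Tendsto (fun n : ℕ => ‖(Eexp κ₁)^[n] z - (Eexp κ₂)^[n] w‖) atTop (𝓝 0)

theorem Asymptotic.symm (h : Asymptotic κ₁ κ₂ z w) : Asymptotic κ₂ κ₁ w z := by
  simpa only [Asymptotic, norm_sub_rev] using h

theorem Asymptotic.trans (h₁₂ : Asymptotic κ₁ κ₂ z w) (h₂₃ : Asymptotic κ₂ κ₃ w u) :
    Asymptotic κ₁ κ₃ z u :=
  squeeze_zero (fun _ => norm_nonneg _) (fun _ => norm_sub_le_norm_sub_add_norm_sub _ _ _)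
    (by simpa using h₁₂.add h₂₃)

theorem asymptotic_iterate_iff (m : ℕ) :
    Asymptotic κ₁ κ₂ ((Eexp κ₁)^[m] z) ((Eexp κ₂)^[m] w) ↔ Asymptotic κ₁ κ₂ z w := by
  simp only [Asymptotic, ← Function.iterate_add_apply]
  exact tendsto_add_atTop_iff_nat (f := fun n => ‖(Eexp κ₁)^[n] z - (Eexp κ₂)^[n] w‖) m

theorem Asymptotic.mem_escapingSet (h : Asymptotic κ₁ κ₂ z w) (hz : z ∈ escapingSet κ₁) :
    w ∈ escapingSet κ₂ := by
  refine tendsto_atTop_mono (fun n => ?_) (hz.atTop_add h.neg)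
  linarith [norm_le_norm_add_norm_sub' ((Eexp κ₁)^[n] z) ((Eexp κ₂)^[n] w)]

theorem norm_sub_le_norm_exp_sub_exp {u v : ℂ} (hu : Real.log 2 ≤ u.re) (huv : ‖u - v‖ ≤ 1 / 2) :
    ‖u - v‖ ≤ ‖Complex.exp u - Complex.exp v‖ := by
  set d := v - u
  have hd : ‖d‖ = ‖u - v‖ := norm_sub_rev _ _
  have hfactor : Complex.exp u - Complex.exp v = Complex.exp u * -(Complex.exp d - 1) := by
    rw [show v = u + d by ring, Complex.exp_add]
    ring
  have hexp : 2 ≤ ‖Complex.exp u‖ := by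
    rw [Complex.norm_exp, ← Real.exp_log two_pos]
    exact Real.exp_le_exp.mpr hu
  have hlin : ‖d‖ - ‖d‖ ^ 2 ≤ ‖Complex.exp d - 1‖ := by
    have := Complex.norm_exp_sub_one_sub_id_le (x := d) (by linarith)
    have := norm_le_norm_add_norm_sub (Complex.exp d - 1) d
    linarith
  rw [hfactor, norm_mul, norm_neg, ← hd]
  nlinarith [norm_nonneg d, norm_nonneg (Complex.exp d - 1)]

theorem Asymptotic.exists_iterate_eq (hz : z ∈ escapingSet κ) (h : Asymptotic κ κ z w) :
    ∃ m, (Eexp κ)^[m] z = (Eexp κ)^[m] w := by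
  have hfar := (tendsto_re_iterate_of_mem_escapingSet hz).eventually_ge_atTop (Real.log 2)
  have hclose := h.eventually (ge_mem_nhds (by norm_num : (0 : ℝ) < 1 / 2))
  obtain ⟨K, hK⟩ := (hfar.and hclose).exists_forall_of_atTop
  set δ := fun n => ‖(Eexp κ)^[n + K] z - (Eexp κ)^[n + K] w‖
  have hmono : Monotone δ := monotone_nat_of_le_succ fun n => by
    obtain ⟨hre, hclose⟩ := hK (n + K) (by omega)
    have := norm_sub_le_norm_exp_sub_exp hre hclose
    simpa only [δ, add_right_comm n 1 K, Function.iterate_succ_apply', Eexp,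
      add_sub_add_right_eq_sub] using this
  have := hmono.ge_of_tendsto ((tendsto_add_atTop_iff_nat K).2 h) 0
  simp only [δ, zero_add] at this
  exact ⟨K, sub_eq_zero.1 (norm_le_zero_iff.1 this)⟩

theorem Asymptotic.eventually_stripIndex_eq (hz : z ∈ escapingSet κ₁)
    (h : Asymptotic κ₁ κ₂ z w) :
    ∀ᶠ n in atTop, stripIndex ((Eexp κ₁)^[n] z) = stripIndex ((Eexp κ₂)^[n] w) := by
  have hre : ∀ᶠ n in atTop, κ₁.re < ((Eexp κ₁)^[n + 1] z).re :=
    ((tendsto_add_atTop_iff_nat 1).2 (tendsto_re_iterate_of_mem_escapingSet hz)).eventually_gt_atTop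
      _
  filter_upwards [hre, h.eventually (gt_mem_nhds (half_pos pi_pos))] with n hn hclose
  refine stripIndex_eq_of_re_exp_pos ?_ hclose
  rw [Function.iterate_succ_apply', Eexp, Complex.add_re] at hn
  linarith

theorem exists_iterate_eq_stripIndex_eq (hκ : κ ∉ escapingSet κ) (n : ℕ)
    (hv : v ∈ escapingSet κ) (l : ℕ → ℤ) :
    ∃ u ∈ escapingSet κ, (Eexp κ)^[n] u = v ∧ ∀ j < n, stripIndex ((Eexp κ)^[j] u) = l j := by
  induction n generalizing l with
  | zero => exact ⟨v, hv, rfl, fun j hj => absurd hj (Nat.not_lt_zero j)⟩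
  | succ n ih =>
    obtain ⟨u', hu', hu'v, hu'l⟩ := ih fun j => l (j + 1)
    have hne : u' ≠ κ := by rintro rfl; exact hκ hu'
    obtain ⟨u, hu, hul⟩ := exists_eexp_eq_stripIndex_eq hne (l 0)
    refine ⟨u, eexp_mem_escapingSet_iff.1 (hu ▸ hu'), by rwa [Function.iterate_succ_apply, hu],
      fun j hj => ?_⟩
    cases j with
    | zero => exact hul
    | succ j =>
      rw [Function.iterate_succ_apply, hu]
      exact hu'l j (by omega)

def Shadows (κ₁ κ₂ z w : ℂ) : Prop :=
  Asymptotic κ₁ κ₂ z w ∧ ∀ n, stripIndex ((Eexp κ₁)^[n] z) = stripIndex ((Eexp κ₂)^[n] w)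

theorem Shadows.symm (h : Shadows κ₁ κ₂ z w) : Shadows κ₂ κ₁ w z :=
  ⟨h.1.symm, fun n => (h.2 n).symm⟩

theorem Shadows.eexp (h : Shadows κ₁ κ₂ z w) : Shadows κ₁ κ₂ (Eexp κ₁ z) (Eexp κ₂ w) :=
  ⟨(asymptotic_iterate_iff 1).2 h.1, fun n => h.2 (n + 1)⟩

theorem Shadows.eq (hw : w ∈ escapingSet κ₂) (h : Shadows κ₁ κ₂ z w) (h' : Shadows κ₁ κ₂ z u) :
    w = u := by
  obtain ⟨m, hm⟩ := (h.1.symm.trans h'.1).exists_iterate_eq hw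
  exact eq_of_iterate_eq_of_itinerary_eq (fun _ _ => eq_of_eexp_eq_of_stripIndex_eq) hm
    fun k _ => (h.2 k).symm.trans (h'.2 k)

theorem exists_shadows_of_asymptotic_iterate (h₂ : κ₂ ∉ escapingSet κ₂) (hz : z ∈ escapingSet κ₁)
    {K : ℕ} (h : Asymptotic κ₁ κ₂ ((Eexp κ₁)^[K] z) w) :
    ∃ u ∈ escapingSet κ₂, Shadows κ₁ κ₂ z u := by
  have hzK := (iterate_mem_escapingSet_iff K).2 hz
  obtain ⟨N, hN⟩ := (h.eventually_stripIndex_eq hzK).exists_forall_of_atTop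
  obtain ⟨u, hu, huw, hul⟩ := exists_iterate_eq_stripIndex_eq h₂ (N + K)
    ((iterate_mem_escapingSet_iff N).2 (h.mem_escapingSet hzK))
    fun j => stripIndex ((Eexp κ₁)^[j] z)
  refine ⟨u, hu, ?_, fun j => ?_⟩
  · rw [← asymptotic_iterate_iff (N + K), huw, Function.iterate_add_apply]
    exact (asymptotic_iterate_iff N).2 h
  · rcases lt_or_ge j (N + K) with hj | hj
    · exact (hul j hj).symm
    obtain ⟨i, rfl⟩ := Nat.exists_eq_add_of_le' hj
    rw [Function.iterate_add_apply _ i _ u, huw]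
    simpa only [Function.iterate_add_apply] using hN (i + N) (by omega)

theorem exists_asymptotic_of_forall_le (hz : z ∈ escapingSet κ₁)
    (hsmall : ∀ k, 4 * (1 + ‖κ₁ - κ₂‖) * Real.exp (-((Eexp κ₁)^[k] z).re) ≤ 1) :
    ∃ w, Asymptotic κ₁ κ₂ z w := by
  set c := 1 + ‖κ₁ - κ₂‖
  set Z := fun k => (Eexp κ₁)^[k] z
  have hc : 0 ≤ c := by positivity
  have hZsmall : ∀ k, 4 * c * Real.exp (-(Z k).re) ≤ 1 := hsmall
  obtain ⟨w, hw⟩ := exists_forall_dist_iterate_le (f := Eexp κ₂) (by unfold Eexp; fun_prop)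
    (Z := Z) (δ := fun k => 2 * c * Real.exp (-(Z k).re)) (fun k => by positivity)
    fun k ζ hζ => by
      have hZ : Z (k + 1) = Complex.exp (Z k) + κ₁ := Function.iterate_succ_apply' _ _ _
      have ha : ‖ζ - κ₂ - Complex.exp (Z k)‖ ≤ c := by
        have hle : ‖ζ - κ₂ - Complex.exp (Z k)‖ ≤ ‖ζ - Z (k + 1)‖ + ‖κ₁ - κ₂‖ := by
          refine le_of_eq_of_le ?_ (norm_add_le _ _)
          rw [hZ]
          congr 1
          ring
        rw [dist_eq_norm] at hζ
        linarith [hZsmall (k + 1)]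
      obtain ⟨ξ, hξ, hξZ⟩ := exists_exp_eq_add_of_norm_le (z := Z k) ha (by linarith [hZsmall k])
      exact ⟨ξ, by rw [Eexp, hξ]; ring, by rwa [dist_eq_norm]⟩
  refine ⟨w, squeeze_zero (fun _ => norm_nonneg _) (fun k => ?_)
    (by simpa using (tendsto_exp_neg_re_iterate_of_mem_escapingSet hz).const_mul (2 * c))⟩
  rw [← dist_eq_norm, dist_comm]
  exact hw k

theorem exists_shadows (h₂ : κ₂ ∉ escapingSet κ₂) (hz : z ∈ escapingSet κ₁) :
    ∃ w ∈ escapingSet κ₂, Shadows κ₁ κ₂ z w := by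
  obtain ⟨K, hK⟩ := (((tendsto_exp_neg_re_iterate_of_mem_escapingSet hz).const_mul
    (4 * (1 + ‖κ₁ - κ₂‖))).eventually (ge_mem_nhds (by norm_num : 4 * (1 + ‖κ₁ - κ₂‖) * 0 < 1))
    ).exists_forall_of_atTop
  obtain ⟨w, hw⟩ := exists_asymptotic_of_forall_le (κ₂ := κ₂)
    ((iterate_mem_escapingSet_iff K).2 hz) fun k => by
      simpa only [← Function.iterate_add_apply] using hK (k + K) (by omega)
  exact exists_shadows_of_asymptotic_iterate h₂ hz hw

end Escaping

/-- If neither singular value escapes, then there is a bijection between the escaping sets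
of `E_{κ₁}` and `E_{κ₂}` which conjugates the dynamics and keeps orbits asymptotically
together. -/
theorem exp_escaping_bijection (κ₁ κ₂ : ℂ)
    (h₁ : κ₁ ∉ escapingSet κ₁) (h₂ : κ₂ ∉ escapingSet κ₂) :
    ∃ Φ : ℂ → ℂ, Set.BijOn Φ (escapingSet κ₁) (escapingSet κ₂) ∧
      ∀ z ∈ escapingSet κ₁,
        Φ (Eexp κ₁ z) = Eexp κ₂ (Φ z) ∧
        Tendsto (fun n : ℕ => ‖(Eexp κ₁)^[n] z - (Eexp κ₂)^[n] (Φ z)‖)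
          atTop (𝓝 0) := by
  choose! Φ hΦ using fun z (hz : z ∈ escapingSet κ₁) => exists_shadows h₂ hz
  refine ⟨Φ, ⟨fun z hz => (hΦ z hz).1, fun z hz z' hz' hzz' => ?_, fun w hw => ?_⟩,
    fun z hz => ⟨?_, (hΦ z hz).2.1⟩⟩
  · exact (hΦ z hz).2.symm.eq hz (hzz' ▸ (hΦ z' hz').2.symm)
  · obtain ⟨z, hz, hzw⟩ := exists_shadows h₁ hw
    exact ⟨z, hz, (hΦ z hz).2.eq (hΦ z hz).1 hzw.symm⟩
  · have hEz := eexp_mem_escapingSet_iff.2 hz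
    exact (hΦ _ hEz).2.eq (hΦ _ hEz).1 (hΦ z hz).2.eexp
end
end

section
/- Let κ ∈ ℂ and c > 0, and let (r_n)_{n≥1} be a sequence of positive real numbers with r_n → ∞ and r_{n+1} ≤ exp(r_n) + c for all n. Then there exist a point z ∈ I(E_κ) and n₀ ∈ ℕ such that |Re(E_κ^{n−1}(z)) − r_n| ≤ 2 + 2π for all n ≥ n₀. -/
open Filter Topology ENNReal

noncomputable section

/-! Choose target points `w n` with `Re w n = r n` and `‖w (n+1)‖ = exp (r n) + c`. Once `exp (r n)` is
large, every point `v` of the closed disc of radius `π + 1` about `w (n+1)` has a preimage under `E_κ`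
in the disc of radius `π + 1` about `w n`: a logarithm of `v - κ` has real part `log ‖v - κ‖`, within
`log 2 < 1` of `r n`, and its imaginary part can be chosen within `π` of `Im (w n)`. By compactness some
orbit visits all these discs, and pulling its second point back finitely many times gives `z`. -/

open Set Metric Real

namespace Complex

def logNear (y : ℝ) (u : ℂ) : ℂ :=
  log u + (round ((y - arg u) / (2 * π)) : ℤ) * (2 * π * I)

theorem exp_logNear (y : ℝ) {u : ℂ} (hu : u ≠ 0) : exp (logNear y u) = u := by
  rw [logNear, exp_add, exp_int_mul_two_pi_mul_I, mul_one, exp_log hu]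

@[simp]
theorem logNear_re (y : ℝ) (u : ℂ) : (logNear y u).re = Real.log ‖u‖ := by
  simp [logNear, log_re]

theorem abs_logNear_im_sub_le (y : ℝ) (u : ℂ) : |(logNear y u).im - y| ≤ π := by
  set t := (y - arg u) / (2 * π)
  have him : (logNear y u).im - y = -(2 * π) * (t - round t) := by
    simp only [logNear, add_im, log_im, mul_im, intCast_re, mul_re, re_ofNat, ofReal_re, im_ofNat,
      ofReal_im, mul_zero, sub_zero, I_im, mul_one, zero_mul, add_zero, I_re, intCast_im, sub_self,
      neg_mul, t]
    field_simp
    ring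
  rw [him, abs_mul, abs_neg, abs_of_pos two_pi_pos]
  nlinarith [abs_sub_round t, pi_pos]

theorem norm_mk_sqrt_sq_sub_sq {x ρ : ℝ} (h : |x| ≤ ρ) : ‖(⟨x, √(ρ ^ 2 - x ^ 2)⟩ : ℂ)‖ = ρ := by
  have hρ : 0 ≤ ρ := (abs_nonneg x).trans h
  have hsq : x ^ 2 ≤ ρ ^ 2 := by nlinarith [sq_abs x, abs_nonneg x]
  rw [norm_def, normSq_mk, Real.mul_self_sqrt (by linarith)]
  convert Real.sqrt_sq hρ using 2
  ring

end Complex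

theorem Real.abs_log_sub_log_le_log_two {a b : ℝ} (hb : 0 < b) (h : |a - b| ≤ b / 2) :
    |log a - log b| ≤ log 2 := by
  obtain ⟨hlo, hhi⟩ := abs_le.mp h
  rw [abs_le]
  constructor
  · have := log_le_log (by positivity) (show b / 2 ≤ a by linarith)
    rw [log_div hb.ne' two_ne_zero] at this
    linarith
  · have := log_le_log (by linarith) (show a ≤ 2 * b by linarith)
    rw [log_mul two_ne_zero hb.ne'] at this
    linarith

theorem exists_forall_iterate_mem_of_surjOn {X : Type*} [TopologicalSpace X] {f : X → X}
    (hf : Continuous f) {K : ℕ → Set X} (hK₀ : IsCompact (K 0)) (hK : ∀ n, IsClosed (K n))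
    (hne : ∀ n, (K n).Nonempty) (hsurj : ∀ n, SurjOn f (K n) (K (n + 1))) :
    ∃ x, ∀ n, f^[n] x ∈ K n := by
  set A : ℕ → Set X := fun N => ⋂ n ≤ N, f^[n] ⁻¹' K n
  have hback : ∀ N, ∀ y ∈ K N, ∃ x ∈ A N, f^[N] x = y := by
    intro N
    induction N with
    | zero => exact fun y hy => ⟨y, by simpa [A] using hy, rfl⟩
    | succ N ih =>
      intro y hy
      obtain ⟨y', hy', rfl⟩ := hsurj N hy
      obtain ⟨x, hx, rfl⟩ := ih y' hy'
      have hxN : f^[N + 1] x = f (f^[N] x) := Function.iterate_succ_apply' f N x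
      refine ⟨x, mem_iInter₂.mpr fun n hn => ?_, hxN⟩
      rcases Nat.le_succ_iff.mp hn with hn | rfl
      · exact mem_iInter₂.mp hx n hn
      · rwa [mem_preimage, hxN]
  obtain ⟨x, hx⟩ := IsCompact.nonempty_iInter_of_sequence_nonempty_isCompact_isClosed A
    (fun N _ hx => mem_iInter₂.mpr fun n hn => mem_iInter₂.mp hx n (hn.trans N.le_succ))
    (fun N => let ⟨y, hy⟩ := hne N; let ⟨x, hx, _⟩ := hback N y hy; ⟨x, hx⟩)
    (hK₀.of_isClosed_subset (isClosed_biInter fun n _ => (hK n).preimage (hf.iterate n))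
      fun _ hx => mem_iInter₂.mp hx 0 le_rfl)
    (fun N => isClosed_biInter fun n _ => (hK n).preimage (hf.iterate n))
  exact ⟨x, fun n => mem_iInter₂.mp (mem_iInter.mp hx n) n le_rfl⟩

theorem tendsto_norm_atTop_of_abs_re_sub_le {α : Type*} {l : Filter α} {u : α → ℂ} {x : α → ℝ}
    {D : ℝ} (hx : Tendsto x l atTop) (hu : ∀ᶠ a in l, |(u a).re - x a| ≤ D) :
    Tendsto (fun a => ‖u a‖) l atTop := by
  refine tendsto_atTop_mono' l ?_ (tendsto_atTop_add_const_right l (-D) hx)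
  filter_upwards [hu] with a ha
  linarith [(abs_le.mp ha).1, Complex.re_le_norm (u a)]

theorem continuous_Eexp (κ : ℂ) : Continuous (Eexp κ) :=
  Complex.continuous_exp.add continuous_const

theorem Eexp_ne (κ z : ℂ) : Eexp κ z ≠ κ := by
  simp [Eexp, Complex.exp_ne_zero]

theorem Eexp_logNear (κ : ℂ) (y : ℝ) {v : ℂ} (hv : v ≠ κ) :
    Eexp κ (Complex.logNear y (v - κ)) = v := by
  rw [Eexp, Complex.exp_logNear y (sub_ne_zero.mpr hv), sub_add_cancel]

theorem exists_iterate_Eexp_eq {κ v : ℂ} (hv : v ≠ κ) (m : ℕ) : ∃ z, (Eexp κ)^[m] z = v := by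
  induction m generalizing v with
  | zero => exact ⟨v, rfl⟩
  | succ m ih =>
    set u := Complex.logNear (κ.im + 2 * π) (v - κ)
    have hu : u ≠ κ := by
      intro h
      have hπ := Complex.abs_logNear_im_sub_le (κ.im + 2 * π) (v - κ)
      rw [show u.im = κ.im by rw [h]] at hπ
      linarith [(abs_le.mp hπ).1, pi_pos]
    obtain ⟨z, hz⟩ := ih hu
    exact ⟨z, by rw [Function.iterate_succ_apply', hz, Eexp_logNear κ _ hv]⟩

theorem surjOn_Eexp_closedBall {κ w w' : ℂ} {c : ℝ} (hw' : ‖w'‖ = exp w.re + c)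
    (hlarge : 2 * (π + 1 + ‖κ‖ + |c|) ≤ exp w.re) :
    SurjOn (Eexp κ) (closedBall w (π + 1)) (closedBall w' (π + 1)) := by
  intro v hv
  rw [mem_closedBall, dist_eq_norm] at hv
  have hclose : |‖v - κ‖ - exp w.re| ≤ exp w.re / 2 :=
    calc |‖v - κ‖ - exp w.re| = |(‖v - κ‖ - ‖w'‖) + c| := by rw [hw']; ring_nf
      _ ≤ |‖v - κ‖ - ‖w'‖| + |c| := abs_add_le _ _
      _ ≤ ‖v - w' - κ‖ + |c| := by rw [sub_right_comm]; gcongr; exact abs_norm_sub_norm_le _ _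
      _ ≤ ‖v - w'‖ + ‖κ‖ + |c| := by gcongr; exact norm_sub_le _ _
      _ ≤ exp w.re / 2 := by linarith
  have hvκ : v ≠ κ := by
    rintro rfl
    rw [sub_self, norm_zero, zero_sub, abs_neg, abs_of_pos (exp_pos _)] at hclose
    linarith [exp_pos w.re]
  refine ⟨Complex.logNear w.im (v - κ), ?_, Eexp_logNear κ w.im hvκ⟩
  have hre : |Real.log ‖v - κ‖ - w.re| ≤ 1 := by
    simpa only [log_exp] using (abs_log_sub_log_le_log_two (exp_pos w.re) hclose).trans
      (log_two_lt_d9.le.trans (by norm_num))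
  rw [mem_closedBall, dist_eq_norm]
  calc _ ≤ |(Complex.logNear w.im (v - κ) - w).re| + |(Complex.logNear w.im (v - κ) - w).im| :=
        Complex.norm_le_abs_re_add_abs_im _
    _ ≤ 1 + π := by
      rw [Complex.sub_re, Complex.logNear_re, Complex.sub_im]
      gcongr
      exact Complex.abs_logNear_im_sub_le _ _
    _ = π + 1 := add_comm _ _

theorem exists_abs_re_iterate_Eexp_sub_le (κ : ℂ) {c : ℝ} {x : ℕ → ℝ}
    (hstep : ∀ k, |x (k + 1)| ≤ exp (x k) + c)
    (hlarge : ∀ k, 2 * (π + 1 + ‖κ‖ + |c|) ≤ exp (x k)) :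
    ∃ z, ∀ k, |((Eexp κ)^[k] z).re - x k| ≤ π + 1 := by
  -- Only `‖w (k + 1)‖ = exp (x k) + c` is used; the modulus of `w 0` (where `0 - 1 = 0`) is junk.
  set w : ℕ → ℂ := fun k => ⟨x k, √((exp (x (k - 1)) + c) ^ 2 - x k ^ 2)⟩
  obtain ⟨z, hz⟩ := exists_forall_iterate_mem_of_surjOn (K := fun k => closedBall (w k) (π + 1))
    (continuous_Eexp κ) (isCompact_closedBall _ _) (fun _ => isClosed_closedBall)
    (fun _ => nonempty_closedBall.mpr (by positivity))
    (fun k => surjOn_Eexp_closedBall (Complex.norm_mk_sqrt_sq_sub_sq (hstep k)) (hlarge k))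
  refine ⟨z, fun k => ?_⟩
  have hzk := hz k
  rw [mem_closedBall, dist_eq_norm] at hzk
  exact (Complex.abs_re_le_norm ((Eexp κ)^[k] z - w k)).trans hzk

theorem exp_arbitrary_escape_speed_general (κ : ℂ) (c : ℝ) (r : ℕ → ℝ)
    (hlim : Tendsto r atTop atTop)
    (hrec : ∀ n : ℕ, 1 ≤ n → r (n + 1) ≤ Real.exp (r n) + c) :
    ∃ z ∈ escapingSet κ, ∃ n₀ : ℕ, 1 ≤ n₀ ∧ ∀ n : ℕ, n₀ ≤ n →
      |((Eexp κ)^[n - 1] z).re - r n| ≤ 2 + 2 * Real.pi := by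
  obtain ⟨m, hm⟩ := eventually_atTop.mp ((eventually_ge_atTop 1).and
    ((hlim.eventually_ge_atTop 0).and
      ((tendsto_exp_atTop.comp hlim).eventually_ge_atTop (2 * (π + 1 + ‖κ‖ + |c|)))))
  obtain ⟨p, hp⟩ := exists_abs_re_iterate_Eexp_sub_le κ (x := fun k => r (m + k))
    (fun k => (abs_of_nonneg (hm (m + k + 1) (by omega)).2.1).trans_le
      (hrec _ (hm (m + k) (by omega)).1))
    (fun k => (hm (m + k) (by omega)).2.2)
  -- `p` itself might be the omitted value `κ`; its image is not.
  obtain ⟨z, hz⟩ := exists_iterate_Eexp_eq (Eexp_ne κ p) m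
  have htrack : ∀ n, m + 1 ≤ n → |((Eexp κ)^[n - 1] z).re - r n| ≤ π + 1 := by
    intro n hn
    obtain ⟨k, rfl⟩ := Nat.exists_eq_add_of_le hn
    rw [show m + 1 + k - 1 = k + m by omega, Function.iterate_add_apply, hz,
      ← Function.iterate_succ_apply, show m + 1 + k = m + (k + 1) by omega]
    exact hp (k + 1)
  refine ⟨z, ?_, m + 1, le_add_self, fun n hn => (htrack n hn).trans (by linarith [pi_pos])⟩
  exact tendsto_norm_atTop_of_abs_re_sub_le (hlim.comp (tendsto_add_atTop_nat 1))
    (eventually_atTop.mpr ⟨m, fun n hn => by simpa using htrack (n + 1) (by omega)⟩)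

/-- **Arbitrary escape speed**: for any admissible sequence `(r_n)` of positive reals with
`r_n → ∞` and `r_{n+1} ≤ exp(r_n) + c`, there is an escaping point of `E_κ` whose orbit's
real parts follow `(r_n)` up to an error of `2 + 2π`. -/
theorem exp_arbitrary_escape_speed (κ : ℂ) (c : ℝ) (hc : 0 < c) (r : ℕ → ℝ)
    (hpos : ∀ n : ℕ, 1 ≤ n → 0 < r n)
    (hlim : Tendsto r atTop atTop)
    (hrec : ∀ n : ℕ, 1 ≤ n → r (n + 1) ≤ Real.exp (r n) + c) :
    ∃ z ∈ escapingSet κ, ∃ n₀ : ℕ, 1 ≤ n₀ ∧ ∀ n : ℕ, n₀ ≤ n →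
      |((Eexp κ)^[n - 1] z).re - r n| ≤ 2 + 2 * Real.pi :=
  exp_arbitrary_escape_speed_general κ c r hlim hrec
end
end

section
/- For every external address s the following hold: (i) the set {t ≥ 0 : (s,t) ∈ X̄} equals [t_s, ∞) ∩ [0,∞), where t_s := inf{t ≥ 0 : (s,t) ∈ X̄} ∈ [0,∞] (with inf ∅ := ∞); in particular this set is empty when t_s = ∞; (ii) every real t > t_s satisfies (s,t) ∈ X; (iii) if t_s < ∞ then 𝓕(s, t_s) = (σ(s), t_{σ(s)}); (iv) the function s ↦ t_s ∈ [0,∞] is lower semicontinuous with respect to the order topology induced by the lexicographic order on ℤ^ℕ. -/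
open Filter Topology ENNReal

noncomputable section

/-! The iterates `(Fmod^[n] (s, t)).2` are continuous and nondecreasing in `t`, so each fibre
`{t ≥ 0 : (s, t) ∈ X̄}` is a closed half-line `[t_s, ∞)`. Above `t_s` the orbit escapes because
`e^b - e^a ≥ e^(b-a) - 1` for `0 ≤ a ≤ b`, so its distance to the orbit of `t_s` grows at least
linearly. `𝓕(s, ·)` maps the fibre over `s` monotonically onto the fibre over `σ s`, so it sends
`t_s` to `t_{σ s}`. Finally, `(s, t) ∉ X̄` is witnessed at a finite time `m` and only involves
`s₀, …, s_m`; such prefix cylinders are open in the lexicographic order topology, which gives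
lower semicontinuity. -/

open Function

lemma Fexp_mono : Monotone Fexp := fun _ _ h => sub_le_sub_right (Real.exp_le_exp.2 h) 1

lemma ofLex_shiftA_iterate (s : Addr) (n k : ℕ) : ofLex (shiftA^[n] s) k = ofLex s (k + n) := by
  induction n generalizing k with
  | zero => rfl
  | succ n ih =>
    rw [iterate_succ_apply', shiftA, ofLex_toLex, ih, add_right_comm, add_assoc]

lemma Fmod_iterate_fst (p : Addr × ℝ) (n : ℕ) : (Fmod^[n] p).1 = shiftA^[n] p.1 := by
  induction n with
  | zero => rfl
  | succ n ih => rw [iterate_succ_apply', iterate_succ_apply', ← ih]; rfl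

lemma Fmod_iterate_succ_snd (p : Addr × ℝ) (n : ℕ) :
    (Fmod^[n + 1] p).2 = Fexp (Fmod^[n] p).2 - 2 * Real.pi * |((ofLex p.1 (n + 1) : ℤ) : ℝ)| := by
  rw [iterate_succ_apply', Fmod, Fmod_iterate_fst, ofLex_shiftA_iterate, add_comm 1 n]

lemma monotone_Fmod_iterate_snd (s : Addr) (n : ℕ) :
    Monotone fun t : ℝ => (Fmod^[n] (s, t)).2 := by
  induction n with
  | zero => exact monotone_id
  | succ n ih =>
    intro t t' h
    simp only [Fmod_iterate_succ_snd]
    exact sub_le_sub_right (Fexp_mono (ih h)) _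

lemma continuous_Fmod_iterate_snd (s : Addr) (n : ℕ) :
    Continuous fun t : ℝ => (Fmod^[n] (s, t)).2 := by
  induction n with
  | zero => exact continuous_id
  | succ n ih =>
    simp only [Fmod_iterate_succ_snd, Fexp]
    fun_prop

lemma Fmod_iterate_snd_congr {s s' : Addr} {n : ℕ} (h : ∀ k ≤ n, ofLex s k = ofLex s' k) (t : ℝ) :
    (Fmod^[n] (s, t)).2 = (Fmod^[n] (s', t)).2 := by
  induction n with
  | zero => rfl
  | succ n ih =>
    rw [Fmod_iterate_succ_snd, Fmod_iterate_succ_snd, ih fun k hk => h k (by omega),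
      h (n + 1) le_rfl]

lemma mem_Xbar_iff_Fmod (p : Addr × ℝ) : p ∈ Xbar ↔ 0 ≤ p.2 ∧ Fmod p ∈ Xbar :=
  ⟨fun h => ⟨h 0, fun n => h (n + 1)⟩, fun h n => n.casesOn h.1 h.2⟩

lemma sub_add_sq_div_two_le_exp_sub_exp {a b : ℝ} (ha : 0 ≤ a) (hab : a ≤ b) :
    b - a + (b - a) ^ 2 / 2 ≤ Real.exp b - Real.exp a := by
  have hq := Real.quadratic_le_exp_of_nonneg (sub_nonneg.2 hab)
  calc b - a + (b - a) ^ 2 / 2 ≤ Real.exp (b - a) - 1 := by linarith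
    _ ≤ Real.exp a * (Real.exp (b - a) - 1) :=
      le_mul_of_one_le_left (by linarith [sq_nonneg (b - a)]) (Real.one_le_exp ha)
    _ = Real.exp b - Real.exp a := by rw [mul_sub, ← Real.exp_add]; ring_nf

lemma tendsto_Fmod_iterate_snd_of_lt {s : Addr} {t₀ t : ℝ} (h₀ : (s, t₀) ∈ Xbar) (h : t₀ < t) :
    Tendsto (fun n => (Fmod^[n] (s, t)).2) atTop atTop := by
  set d := t - t₀
  have hd : 0 < d := sub_pos.2 h
  have gap : ∀ n : ℕ, d + n * (d ^ 2 / 2) ≤ (Fmod^[n] (s, t)).2 - (Fmod^[n] (s, t₀)).2 := by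
    intro n
    induction n with
    | zero => simp [d]
    | succ n ih =>
      have hdg : d ≤ (Fmod^[n] (s, t)).2 - (Fmod^[n] (s, t₀)).2 :=
        (le_add_of_nonneg_right (by positivity)).trans ih
      have hexp := sub_add_sq_div_two_le_exp_sub_exp (h₀ n) (sub_nonneg.1 (hd.le.trans hdg))
      have hsq := pow_le_pow_left₀ hd.le hdg 2
      simp only [Fmod_iterate_succ_snd, Fexp]
      push_cast
      linarith
  refine tendsto_atTop_mono (fun n => ?_) (tendsto_atTop_add_const_left _ d
    (tendsto_natCast_atTop_atTop.atTop_mul_const (by positivity : 0 < d ^ 2 / 2)))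
  linarith [gap n, h₀ n]

def potentials (s : Addr) : Set ℝ := {t | 0 ≤ t ∧ (s, t) ∈ Xbar}

lemma isClosed_potentials (s : Addr) : IsClosed (potentials s) := by
  have : potentials s = Set.Ici 0 ∩ ⋂ n, {t | 0 ≤ (Fmod^[n] (s, t)).2} := by
    ext t
    simp [potentials, Xbar]
  rw [this]
  exact isClosed_Ici.inter
    (isClosed_iInter fun n => isClosed_le continuous_const (continuous_Fmod_iterate_snd s n))

lemma mem_potentials_of_le {s : Addr} {u t : ℝ} (hu : u ∈ potentials s) (h : u ≤ t) :
    t ∈ potentials s :=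
  ⟨hu.1.trans h, fun n => (hu.2 n).trans (monotone_Fmod_iterate_snd s n h)⟩

lemma bddBelow_potentials (s : Addr) : BddBelow (potentials s) := ⟨0, fun _ ht => ht.1⟩

lemma tS_eq_ofReal_sInf {s : Addr} (h : (potentials s).Nonempty) :
    tS s = ENNReal.ofReal (sInf (potentials s)) :=
  (ENNReal.ofReal_mono.map_csInf_of_continuousAt ENNReal.continuous_ofReal.continuousAt h
    (bddBelow_potentials s)).symm

lemma potentials_nonempty {s : Addr} (h : tS s ≠ ⊤) : (potentials s).Nonempty := by
  by_contra hs
  rw [Set.not_nonempty_iff_eq_empty] at hs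
  exact h (by rw [tS, ← potentials, hs, Set.image_empty, sInf_empty])

lemma mem_Xbar_iff_tS_le {s : Addr} {t : ℝ} (ht : 0 ≤ t) :
    (s, t) ∈ Xbar ↔ tS s ≤ ENNReal.ofReal t := by
  refine ⟨fun h => sInf_le ⟨t, ⟨ht, h⟩, rfl⟩, fun h => ?_⟩
  have hne := potentials_nonempty (ne_top_of_le_ne_top ENNReal.ofReal_ne_top h)
  rw [tS_eq_ofReal_sInf hne, ENNReal.ofReal_le_ofReal_iff ht] at h
  exact (mem_potentials_of_le ((isClosed_potentials s).csInf_mem hne (bddBelow_potentials s)) h).2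

lemma toReal_tS_le_iff {s : Addr} {t : ℝ} (h : tS s ≠ ⊤) (ht : 0 ≤ t) :
    (tS s).toReal ≤ t ↔ (s, t) ∈ Xbar := by
  rw [mem_Xbar_iff_tS_le ht, ENNReal.le_ofReal_iff_toReal_le h ht]

lemma mem_Xbar_toReal_tS {s : Addr} (h : tS s ≠ ⊤) : (s, (tS s).toReal) ∈ Xbar :=
  (toReal_tS_le_iff h ENNReal.toReal_nonneg).1 le_rfl

lemma ofReal_le_tS {s : Addr} {t : ℝ} (h : ∀ u < t, (s, u) ∉ Xbar) : ENNReal.ofReal t ≤ tS s :=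
  le_sInf <| by
    rintro _ ⟨u, ⟨-, hu⟩, rfl⟩
    exact ENNReal.ofReal_le_ofReal (not_lt.1 fun hut => h u hut hu)

lemma mem_Xset_of_tS_lt {s : Addr} {t : ℝ} (h : tS s < ENNReal.ofReal t) : (s, t) ∈ Xset := by
  have hs := mem_Xbar_toReal_tS h.ne_top
  have hlt := ENNReal.toReal_lt_of_lt_ofReal h
  exact ⟨fun n => (hs n).trans (monotone_Fmod_iterate_snd s n hlt.le),
    tendsto_Fmod_iterate_snd_of_lt hs hlt⟩

lemma Fmod_log (s : Addr) {t : ℝ} (ht : 0 ≤ t) :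
    Fmod (s, Real.log (1 + t + 2 * Real.pi * |((ofLex s 1 : ℤ) : ℝ)|)) = (shiftA s, t) := by
  refine Prod.ext rfl ?_
  simp only [Fmod, Fexp]
  rw [Real.exp_log (by positivity)]
  ring

lemma snd_Fmod_toReal_tS {s : Addr} (h : tS s ≠ ⊤) :
    (Fmod (s, (tS s).toReal)).2 = (tS (shiftA s)).toReal := by
  obtain ⟨-, hF⟩ := (mem_Xbar_iff_Fmod _).1 (mem_Xbar_toReal_tS h)
  have hF0 : 0 ≤ (Fmod (s, (tS s).toReal)).2 := hF 0
  have h' : tS (shiftA s) ≠ ⊤ :=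
    ne_top_of_le_ne_top ENNReal.ofReal_ne_top ((mem_Xbar_iff_tS_le hF0).1 hF)
  refine le_antisymm ?_ ((toReal_tS_le_iff h' hF0).2 hF)
  -- the preimage of `t_{σ s}` under `𝓕(s, ·)` is a potential of `s`, hence lies above `t_s`
  set c := 2 * Real.pi * |((ofLex s 1 : ℤ) : ℝ)|
  set t₂ := Real.log (1 + (tS (shiftA s)).toReal + c)
  have hFt₂ := Fmod_log s (ENNReal.toReal_nonneg (a := tS (shiftA s)))
  have hc : 0 ≤ c := by positivity
  have ht₂ : 0 ≤ t₂ := Real.log_nonneg (by linarith [ENNReal.toReal_nonneg (a := tS (shiftA s))])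
  have hle : (tS s).toReal ≤ t₂ := (toReal_tS_le_iff h ht₂).2
    ((mem_Xbar_iff_Fmod _).2 ⟨ht₂, hFt₂ ▸ mem_Xbar_toReal_tS h'⟩)
  calc (Fmod (s, (tS s).toReal)).2 ≤ (Fmod (s, t₂)).2 := monotone_Fmod_iterate_snd s 1 hle
    _ = (tS (shiftA s)).toReal := by rw [hFt₂]

lemma eq_of_lt_of_lt_toLex_update {ι : Type*} [LinearOrder ι] {β : ι → Type*}
    [∀ i, Preorder (β i)] {x : ∀ i, β i} {y : Lex (∀ i, β i)} {i : ι} {u v : β i}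
    (ha : toLex (update x i u) < y) (hb : y < toLex (update x i v)) :
    ∀ k < i, ofLex y k = x k := by
  obtain ⟨p, hp, hpy⟩ := ha
  obtain ⟨q, hq, hqy⟩ := hb
  change ∀ j < p, update x i u j = ofLex y j at hp
  change ∀ j < q, ofLex y j = update x i v j at hq
  change update x i u p < ofLex y p at hpy
  change ofLex y q < update x i v q at hqy
  suffices hip : i ≤ p from fun k hk =>
    (hp k (hk.trans_le hip)).symm.trans (update_of_ne hk.ne _ _)
  by_contra! hpi
  rw [update_of_ne hpi.ne] at hpy
  rcases lt_trichotomy q p with hqp | rfl | hpq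
  · have hyq := hp q hqp
    rw [update_of_ne (hqp.trans hpi).ne] at hyq hqy
    exact (hyq ▸ hqy).false
  · rw [update_of_ne hpi.ne] at hqy
    exact (hpy.trans hqy).false
  · have hyp := hq p hpq
    rw [update_of_ne hpi.ne] at hyp
    exact (hyp ▸ hpy).false

lemma eventually_ofLex_eq (x : Addr) (n : ℕ) :
    ∀ᶠ y : Addr in 𝓝 x, ∀ k ≤ n, ofLex y k = ofLex x k := by
  have ha : toLex (update (ofLex x) (n + 1) (ofLex x (n + 1) - 1)) < x :=
    Pi.toLex_update_lt_self_iff.2 (sub_one_lt _)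
  have hb : x < toLex (update (ofLex x) (n + 1) (ofLex x (n + 1) + 1)) :=
    Pi.lt_toLex_update_self_iff.2 (lt_add_one _)
  filter_upwards [Ioo_mem_nhds ha hb] with y hy k hk
  exact eq_of_lt_of_lt_toLex_update hy.1 hy.2 k (Nat.lt_succ_of_le hk)

lemma eventually_notMem_Xbar {x : Addr} {t : ℝ} (h : (x, t) ∉ Xbar) :
    ∀ᶠ y in 𝓝 x, ∀ u ≤ t, (y, u) ∉ Xbar := by
  obtain ⟨m, hm⟩ : ∃ m, (Fmod^[m] (x, t)).2 < 0 := by simpa [Xbar] using h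
  filter_upwards [eventually_ofLex_eq x m] with y hy u hu hyu
  have := hyu m
  rw [Fmod_iterate_snd_congr hy] at this
  linarith [monotone_Fmod_iterate_snd x m hu]

lemma lowerSemicontinuous_tS : LowerSemicontinuous tS := by
  intro x c hc
  obtain ⟨t, hct, htx⟩ := ENNReal.lt_iff_exists_nnreal_btwn.1 hc
  have hx : (x, (t : ℝ)) ∉ Xbar := fun h =>
    ((mem_Xbar_iff_tS_le t.2).1 h).not_gt (by simpa using htx)
  filter_upwards [eventually_notMem_Xbar hx] with y hy
  calc c < t := hct
    _ = ENNReal.ofReal t := ENNReal.ofReal_coe_nnreal.symm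
    _ ≤ tS y := ofReal_le_tS fun u hu => hy u hu.le

/-- **Comb structure of `X̄` and `X`**: for every external address `s`,
(i) for `t ≥ 0` one has `(s,t) ∈ X̄` iff `t ≥ t_s` (so `{t ≥ 0 : (s,t) ∈ X̄} = [t_s,∞) ∩ [0,∞)`,
empty when `t_s = ∞`); (ii) every `t > t_s` satisfies `(s,t) ∈ X`;
(iii) if `t_s < ∞` then `𝓕(s,t_s) = (σ s, t_{σ s})`; and
(iv) `s ↦ t_s` is lower semicontinuous for the lexicographic order topology. -/
theorem model_comb_structure (s : Addr) :
    (∀ t : ℝ, 0 ≤ t → ((s, t) ∈ Xbar ↔ tS s ≤ ENNReal.ofReal t)) ∧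
    (∀ t : ℝ, tS s < ENNReal.ofReal t → (s, t) ∈ Xset) ∧
    (tS s ≠ ⊤ → Fmod (s, (tS s).toReal) = (shiftA s, (tS (shiftA s)).toReal)) ∧
    LowerSemicontinuous tS :=
  ⟨fun _ ht => mem_Xbar_iff_tS_le ht, fun _ ht => mem_Xset_of_tS_lt ht,
    fun h => Prod.ext rfl (snd_Fmod_toReal_tS h), lowerSemicontinuous_tS⟩
end
end

section
/- For an external address s define t_s* := sup_{k ≥ 1} F^{−k}(2π|s_{k+1}|) ∈ [0,∞], where F^{−1}(t) = log(1+t) is the inverse of F and F^{−k} denotes its k-th iterate. Then t_s < ∞ if and only if t_s* < ∞, and in that case t_s* ≤ t_s ≤ t_s* + 1. -/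
open Filter Topology ENNReal

noncomputable section

/-- The inverse `F⁻¹(t) = log(1+t)` of the model growth function. -/
def Finv (t : ℝ) : ℝ := Real.log (1 + t)

/-- `t_s* = sup_{k ≥ 1} F^{-k}(2π |s_{k+1}|)`; with our 0-based indexing the paper's entry
`s_{k+1}` (for `k ≥ 1`) is `ofLex s k`, so we take the supremum over `k = m + 1`, `m : ℕ`. -/
def tSstar (s : Addr) : ℝ≥0∞ :=
  ⨆ m : ℕ, ENNReal.ofReal (Finv^[m + 1] (2 * Real.pi * |((ofLex s (m + 1) : ℤ) : ℝ)|))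

/-!
The lower bound holds because a point of `X̄` must stay nonnegative along its orbit, so reading the
orbit backwards, `t ≥ F^{-k}(2π|s_{k+1}|)` for every `k`. For the upper bound, the set of `(s,t)`
with `t ≥ F^{-k}(2π|s_{k+1}|) + 1` for all `k ≥ 1` is forward invariant under `𝓕`: the margin `+1`
gives `e^t ≥ e · (1 + a)` for each of the two relevant entries `a`, and `e ≥ 2` absorbs the
subtraction of `2π|s₂|`. Being contained in `{t ≥ 0}`, this invariant set lies in `X̄`.
-/

namespace Finv

lemma nonneg {x : ℝ} (hx : 0 ≤ x) : 0 ≤ Finv x := Real.log_nonneg (by linarith)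

lemma iterate_nonneg (k : ℕ) {x : ℝ} (hx : 0 ≤ x) : 0 ≤ Finv^[k] x := by
  induction k generalizing x with
  | zero => exact hx
  | succ k ih => exact ih (nonneg hx)

lemma exp_eq {x : ℝ} (hx : 0 ≤ x) : Real.exp (Finv x) = 1 + x :=
  Real.exp_log (by linarith)

lemma le_of_le_Fexp {x t : ℝ} (hx : 0 ≤ x) (h : x ≤ Fexp t) : Finv x ≤ t := by
  rw [← Real.log_exp t]
  exact Real.log_le_log (by linarith) (by unfold Fexp at h; linarith)

lemma add_add_one_le_Fexp {a c t : ℝ} (ha : 0 ≤ a) (hc : 0 ≤ c)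
    (hat : Finv a + 1 ≤ t) (hct : Finv c + 1 ≤ t) : a + c + 1 ≤ Fexp t := by
  have exp_ge (x : ℝ) (hx : 0 ≤ x) (hxt : Finv x + 1 ≤ t) : Real.exp 1 * (1 + x) ≤ Real.exp t := by
    rw [← exp_eq hx, mul_comm, ← Real.exp_add]
    exact Real.exp_le_exp.mpr hxt
  have two_le_exp_one : (2 : ℝ) ≤ Real.exp 1 := by linarith [Real.add_one_le_exp 1]
  have := exp_ge a ha hat
  have := exp_ge c hc hct
  unfold Fexp
  nlinarith

end Finv

/-- `2π|s_{k+1}|` in the paper's 1-based indexing. -/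
def addrWeight (s : Addr) (k : ℕ) : ℝ := 2 * Real.pi * |((ofLex s k : ℤ) : ℝ)|

lemma addrWeight_nonneg (s : Addr) (k : ℕ) : 0 ≤ addrWeight s k := by
  unfold addrWeight; positivity

lemma Fmod_mk (s : Addr) (t : ℝ) : Fmod (s, t) = (shiftA s, Fexp t - addrWeight s 1) := rfl

/-- The term `F^{-(m+1)}(2π|s_{m+2}|)` of the supremum defining `t_s*` (paper's indexing). -/
def tSstarTerm (s : Addr) (m : ℕ) : ℝ := Finv^[m + 1] (addrWeight s (m + 1))

lemma tSstar_eq_iSup (s : Addr) : tSstar s = ⨆ m, ENNReal.ofReal (tSstarTerm s m) := rfl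

lemma tSstarTerm_nonneg (s : Addr) (m : ℕ) : 0 ≤ tSstarTerm s m :=
  Finv.iterate_nonneg _ (addrWeight_nonneg s _)

lemma tSstarTerm_succ (s : Addr) (m : ℕ) :
    tSstarTerm s (m + 1) = Finv (tSstarTerm (shiftA s) m) :=
  Function.iterate_succ_apply' _ _ _

lemma Fmod_mem_Xbar {p : Addr × ℝ} (hp : p ∈ Xbar) : Fmod p ∈ Xbar := fun n => hp (n + 1)

lemma subset_Xbar_of_mapsTo {S : Set (Addr × ℝ)} (hS : Set.MapsTo Fmod S S)
    (h0 : ∀ p ∈ S, 0 ≤ p.2) : S ⊆ Xbar :=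
  fun _ hp n => h0 _ (hS.iterate n hp)

lemma tSstarTerm_le_of_mem_Xbar (m : ℕ) {s : Addr} {t : ℝ} (h : (s, t) ∈ Xbar) :
    tSstarTerm s m ≤ t := by
  have hstep : 0 ≤ Fexp t - addrWeight s 1 := h 1
  induction m generalizing s t with
  | zero => exact Finv.le_of_le_Fexp (addrWeight_nonneg s 1) (by linarith)
  | succ m ih =>
    have hnext : tSstarTerm (shiftA s) m ≤ Fexp t - addrWeight s 1 :=
      ih (Fmod_mem_Xbar h) (Fmod_mem_Xbar h 1)
    rw [tSstarTerm_succ]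
    exact Finv.le_of_le_Fexp (tSstarTerm_nonneg _ _) (by linarith [addrWeight_nonneg s 1])

def aboveTSstar : Set (Addr × ℝ) := {p | ∀ m, tSstarTerm p.1 m + 1 ≤ p.2}

lemma mapsTo_Fmod_aboveTSstar : Set.MapsTo Fmod aboveTSstar aboveTSstar := by
  rintro ⟨s, t⟩ h m
  have hfirst : Finv (addrWeight s 1) + 1 ≤ t := h 0
  have hlater : Finv (tSstarTerm (shiftA s) m) + 1 ≤ t := by
    simpa only [tSstarTerm_succ] using h (m + 1)
  have := Finv.add_add_one_le_Fexp (addrWeight_nonneg s 1) (tSstarTerm_nonneg _ m) hfirst hlater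
  rw [Fmod_mk]
  linarith

lemma aboveTSstar_subset_Xbar : aboveTSstar ⊆ Xbar :=
  subset_Xbar_of_mapsTo mapsTo_Fmod_aboveTSstar
    fun p hp => by linarith [hp 0, tSstarTerm_nonneg p.1 0]

lemma tSstar_le_tS (s : Addr) : tSstar s ≤ tS s := by
  refine le_sInf ?_
  rintro _ ⟨t, ⟨-, hX⟩, rfl⟩
  exact iSup_le fun m => ENNReal.ofReal_le_ofReal (tSstarTerm_le_of_mem_Xbar m hX)

lemma tS_le_tSstar_add_one {s : Addr} (h : tSstar s ≠ ⊤) : tS s ≤ tSstar s + 1 := by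
  set T := (tSstar s).toReal
  have hterm (m : ℕ) : tSstarTerm s m ≤ T :=
    (ENNReal.ofReal_le_iff_le_toReal h).mp
      ((tSstar_eq_iSup s).symm ▸ le_iSup (fun m => ENNReal.ofReal (tSstarTerm s m)) m)
  have hmem : (s, T + 1) ∈ Xbar := aboveTSstar_subset_Xbar fun m => by linarith [hterm m]
  calc tS s ≤ ENNReal.ofReal (T + 1) := sInf_le ⟨T + 1, ⟨by positivity, hmem⟩, rfl⟩
    _ = tSstar s + 1 := by
      rw [ENNReal.ofReal_add ENNReal.toReal_nonneg zero_le_one, ENNReal.ofReal_one,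
        ENNReal.ofReal_toReal h]

/-- **Growth of escaping endpoints**: `s` is exponentially bounded (`t_s < ∞`) iff
`t_s* < ∞`, in which case `t_s* ≤ t_s ≤ t_s* + 1`. -/
theorem tS_vs_tSstar (s : Addr) :
    (tS s ≠ ⊤ ↔ tSstar s ≠ ⊤) ∧
    (tS s ≠ ⊤ → tSstar s ≤ tS s ∧ tS s ≤ tSstar s + 1) := by
  have hfinite : tS s ≠ ⊤ ↔ tSstar s ≠ ⊤ :=
    ⟨fun h => ne_top_of_le_ne_top h (tSstar_le_tS s),
      fun h => ne_top_of_le_ne_top (ENNReal.add_ne_top.mpr ⟨h, ENNReal.one_ne_top⟩)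
        (tS_le_tSstar_add_one h)⟩
  exact ⟨hfinite, fun h => ⟨tSstar_le_tS s, tS_le_tSstar_add_one (hfinite.mp h)⟩⟩
end
end

section
/- Let s be an exponentially bounded external address. Then: (i) s is slow (i.e. (s, t_s) ∉ X) if and only if there exist x ≥ 0 and infinitely many n ≥ 0 such that 2π|s_{n+k}| ≤ F^{k−1}(x) for all k ≥ 1; (ii) there exists x > 0 with 2π|s_n| ≥ F^{n−1}(x) for infinitely many n (i.e. s has positive minimal potential) if and only if there exists x > 0 such that t_{σ^j(s)} > F^j(x) for all j ≥ 0. -/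
open Filter Topology ENNReal

noncomputable section

/-!
The minimal potential satisfies `t_{σ s} = F(t_s) - 2π|s₂|`, so the `𝓕`-orbit of `(s, t_s)`
is `(σⁿ s, t_{σⁿ s})`, and `s` is slow iff `t_{σⁿ s} ↛ ∞`. Two comparisons with iterates
of `F` control `t_{σⁿ s}` by the tail of `s`: every admissible `t` has `2π|s_{k+1}| ≤ F^k(t)`, and
conversely, if `2π|s_{k+1}| ≤ F^{k-1}(x)` for all `k ≥ 1` then `x + 1` is admissible, because
`F(t + 1) - t ≥ F(t) + 1`. For (ii), a bound `F^j(x) ≤ t_{σ^j s}` propagates from `j + 1` down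
to `j`; in the other direction, if the tails are eventually dominated by iterates at `y` with
`F(y) < x`, then `t_{σ^N s} ≤ F^N(F y) + 1`, which is eventually below `F^N(x)` since
`F^N(x) - F^N(F y) → ∞`.
-/

open Function

lemma continuous_Fexp : Continuous Fexp := Real.continuous_exp.sub continuous_const

lemma Fexp_strictMono : StrictMono Fexp := fun _ _ h => sub_lt_sub_right (Real.exp_lt_exp.2 h) 1

lemma Fexp_nonneg {t : ℝ} (ht : 0 ≤ t) : 0 ≤ Fexp t := sub_nonneg.2 (Real.one_le_exp ht)

lemma Fexp_iterate_nonneg {t : ℝ} (ht : 0 ≤ t) (n : ℕ) : 0 ≤ Fexp^[n] t := by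
  induction n with
  | zero => exact ht
  | succ n ih => rw [iterate_succ_apply']; exact Fexp_nonneg ih

lemma Fexp_add_one_le (t : ℝ) : Fexp t + 1 + t ≤ Fexp (t + 1) := by
  have he : 2 ≤ Real.exp 1 := by linarith [Real.add_one_le_exp 1]
  have := Real.add_one_le_exp t
  have := Real.exp_pos t
  simp only [Fexp, Real.exp_add]
  nlinarith

lemma sub_add_sq_le_Fexp_sub {a b : ℝ} (ha : 0 ≤ a) (hab : a ≤ b) :
    (b - a) + (b - a) ^ 2 / 2 ≤ Fexp b - Fexp a := by
  have hq := Real.quadratic_le_exp_of_nonneg (sub_nonneg.2 hab)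
  have h1 : 1 ≤ Real.exp a := Real.one_le_exp ha
  have h : Fexp b - Fexp a = Real.exp a * (Real.exp (b - a) - 1) := by
    rw [Fexp, Fexp, Real.exp_sub]
    field_simp
    ring
  rw [h]
  nlinarith [mul_nonneg (sub_nonneg.2 h1) (by nlinarith : 0 ≤ Real.exp (b - a) - 1)]

lemma tendsto_Fexp_iterate_sub {a b : ℝ} (ha : 0 ≤ a) (hab : a < b) :
    Tendsto (fun n => Fexp^[n] b - Fexp^[n] a) atTop atTop := by
  set δ := b - a with hδ
  have hδ0 : 0 < δ := sub_pos.2 hab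
  have hlin : ∀ n : ℕ, δ + n * (δ ^ 2 / 2) ≤ Fexp^[n] b - Fexp^[n] a := by
    intro n
    induction n with
    | zero => simp [hδ]
    | succ n ih =>
      have hd : δ ≤ Fexp^[n] b - Fexp^[n] a := le_trans (by nlinarith) ih
      have := sub_add_sq_le_Fexp_sub (b := Fexp^[n] b) (Fexp_iterate_nonneg ha n) (by linarith)
      rw [iterate_succ_apply', iterate_succ_apply']
      push_cast
      nlinarith [mul_le_mul hd hd hδ0.le (by linarith)]
  refine tendsto_atTop_mono hlin (tendsto_atTop_add_const_left _ _ ?_)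
  exact tendsto_natCast_atTop_atTop.atTop_mul_const (by positivity)

lemma infinite_setOf_iff_frequently_add {p : ℕ → Prop} (k : ℕ) :
    {n | p n}.Infinite ↔ ∃ᶠ m in atTop, p (m + k) := by
  rw [← Nat.frequently_atTop_iff_infinite]
  conv_lhs => rw [← map_add_atTop_eq_nat k]
  exact frequently_map

namespace Addr

variable {s : Addr} {t x : ℝ}

def weight (s : Addr) (k : ℕ) : ℝ := 2 * Real.pi * |((ofLex s k : ℤ) : ℝ)|

lemma weight_nonneg (s : Addr) (k : ℕ) : 0 ≤ weight s k := by
  unfold weight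
  positivity

lemma weight_shiftA_iterate (s : Addr) (m k : ℕ) :
    weight (shiftA^[m] s) k = weight s (k + m) := by
  induction m generalizing s with
  | zero => rfl
  | succ m ih => exact ih (shiftA s)

lemma Fmod_mk (s : Addr) (t : ℝ) : Fmod (s, t) = (shiftA s, Fexp t - weight s 1) := rfl

def admissible (s : Addr) : Set ℝ := {t | (s, t) ∈ Xbar}

def minPot (s : Addr) : ℝ := sInf (admissible s)

lemma mem_Xbar_iff {p : Addr × ℝ} : p ∈ Xbar ↔ 0 ≤ p.2 ∧ Fmod p ∈ Xbar :=
  ⟨fun h => ⟨h 0, fun n => h (n + 1)⟩, fun ⟨h0, h⟩ n => n.casesOn h0 h⟩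

lemma mem_admissible_iff :
    t ∈ admissible s ↔ 0 ≤ t ∧ Fexp t - weight s 1 ∈ admissible (shiftA s) :=
  mem_Xbar_iff

lemma nonneg_of_mem_admissible (ht : t ∈ admissible s) : 0 ≤ t := ht 0

lemma continuous_Fmod_iterate_snd (n : ℕ) (s : Addr) :
    Continuous fun t : ℝ => (Fmod^[n] (s, t)).2 := by
  induction n generalizing s with
  | zero => exact continuous_id
  | succ n ih =>
    show Continuous fun t => (Fmod^[n] (shiftA s, Fexp t - weight s 1)).2
    exact (ih (shiftA s)).comp (continuous_Fexp.sub continuous_const)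

lemma isClosed_admissible (s : Addr) : IsClosed (admissible s) := by
  have h : admissible s = ⋂ n, (fun t => (Fmod^[n] (s, t)).2) ⁻¹' Set.Ici 0 := by
    ext t
    simp [admissible, Xbar]
  rw [h]
  exact isClosed_iInter fun n => isClosed_Ici.preimage (continuous_Fmod_iterate_snd n s)

lemma bddBelow_admissible (s : Addr) : BddBelow (admissible s) :=
  ⟨0, fun _ => nonneg_of_mem_admissible⟩

lemma minPot_le (ht : t ∈ admissible s) : minPot s ≤ t := csInf_le (bddBelow_admissible s) ht

lemma isLeast_minPot (h : (admissible s).Nonempty) : IsLeast (admissible s) (minPot s) :=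
  ⟨(isClosed_admissible s).csInf_mem h (bddBelow_admissible s), fun _ => minPot_le⟩

lemma minPot_nonneg (h : (admissible s).Nonempty) : 0 ≤ minPot s :=
  nonneg_of_mem_admissible (isLeast_minPot h).1

lemma tS_eq_sInf_admissible (s : Addr) : tS s = sInf (ENNReal.ofReal '' admissible s) := by
  rw [tS]
  congr
  ext t
  exact and_iff_right_of_imp nonneg_of_mem_admissible

lemma admissible_nonempty_of_tS_ne_top (hs : tS s ≠ ⊤) : (admissible s).Nonempty := by
  contrapose! hs
  simp [tS_eq_sInf_admissible, hs]

lemma tS_eq_ofReal_minPot (h : (admissible s).Nonempty) : tS s = ENNReal.ofReal (minPot s) := by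
  rw [tS_eq_sInf_admissible]
  exact (ENNReal.ofReal_mono.map_isLeast (isLeast_minPot h)).csInf_eq

lemma toReal_tS (h : (admissible s).Nonempty) : (tS s).toReal = minPot s := by
  rw [tS_eq_ofReal_minPot h, ENNReal.toReal_ofReal (minPot_nonneg h)]

/-- An admissible potential `v` of `σ s` is reached from `log (v + 1 + 2π|s₂|) ≥ 0`. -/
lemma isLeast_admissible_shiftA (h : (admissible s).Nonempty) :
    IsLeast (admissible (shiftA s)) (Fexp (minPot s) - weight s 1) := by
  refine ⟨(mem_admissible_iff.1 (isLeast_minPot h).1).2, fun v hv => ?_⟩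
  have hv0 := nonneg_of_mem_admissible hv
  have hc := weight_nonneg s 1
  have hpos : 0 < v + 1 + weight s 1 := by linarith
  have hF : Fexp (Real.log (v + 1 + weight s 1)) - weight s 1 = v := by
    rw [Fexp, Real.exp_log hpos]
    ring
  have ht : Real.log (v + 1 + weight s 1) ∈ admissible s :=
    mem_admissible_iff.2 ⟨Real.log_nonneg (by linarith), by rwa [hF]⟩
  calc Fexp (minPot s) - weight s 1
      ≤ Fexp (Real.log (v + 1 + weight s 1)) - weight s 1 :=
        sub_le_sub_right (Fexp_strictMono.monotone (minPot_le ht)) _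
    _ = v := hF

lemma minPot_shiftA (h : (admissible s).Nonempty) :
    minPot (shiftA s) = Fexp (minPot s) - weight s 1 :=
  (isLeast_admissible_shiftA h).csInf_eq

lemma admissible_shiftA_iterate_nonempty (h : (admissible s).Nonempty) (n : ℕ) :
    (admissible (shiftA^[n] s)).Nonempty := by
  induction n with
  | zero => exact h
  | succ n ih => rw [iterate_succ_apply']; exact (isLeast_admissible_shiftA ih).nonempty

lemma minPot_shiftA_iterate_succ (h : (admissible s).Nonempty) (n : ℕ) :
    minPot (shiftA^[n + 1] s) = Fexp (minPot (shiftA^[n] s)) - weight s (n + 1) := by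
  rw [iterate_succ_apply', minPot_shiftA (admissible_shiftA_iterate_nonempty h n),
    weight_shiftA_iterate, add_comm]


lemma minPot_shiftA_iterate_succ_le (h : (admissible s).Nonempty) (n : ℕ) :
    minPot (shiftA^[n + 1] s) ≤ Fexp (minPot (shiftA^[n] s)) := by
  linarith [minPot_shiftA_iterate_succ h n, weight_nonneg s (n + 1)]

lemma weight_succ_le_Fexp_minPot (h : (admissible s).Nonempty) (n : ℕ) :
    weight s (n + 1) ≤ Fexp (minPot (shiftA^[n] s)) := by
  linarith [minPot_shiftA_iterate_succ h n,
    minPot_nonneg (admissible_shiftA_iterate_nonempty h (n + 1))]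

lemma Fmod_iterate_mk_minPot (h : (admissible s).Nonempty) (n : ℕ) :
    Fmod^[n] (s, minPot s) = (shiftA^[n] s, minPot (shiftA^[n] s)) := by
  induction n with
  | zero => rfl
  | succ n ih =>
    rw [iterate_succ_apply', ih, Fmod_mk,
      ← minPot_shiftA (admissible_shiftA_iterate_nonempty h n), iterate_succ_apply']

lemma weight_succ_le_Fexp_iterate (ht : t ∈ admissible s) (k : ℕ) :
    weight s (k + 1) ≤ Fexp^[k + 1] t := by
  induction k generalizing s t with
  | zero =>
    show weight s 1 ≤ Fexp t
    linarith [nonneg_of_mem_admissible (mem_admissible_iff.1 ht).2]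
  | succ k ih =>
    calc weight s (k + 2) = weight (shiftA s) (k + 1) := rfl
      _ ≤ Fexp^[k + 1] (Fexp t - weight s 1) := ih (mem_admissible_iff.1 ht).2
      _ ≤ Fexp^[k + 1] (Fexp t) :=
        (Fexp_strictMono.iterate _).monotone (by linarith [weight_nonneg s 1])

lemma mem_admissible_of_weight_le (hx : 0 ≤ x) (hw : ∀ k, weight s (k + 1) ≤ Fexp^[k] x)
    (ht : x + 1 ≤ t) : t ∈ admissible s := by
  intro n
  induction n generalizing s x t with
  | zero => show 0 ≤ t; linarith
  | succ n ih =>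
    show 0 ≤ (Fmod^[n] (shiftA s, Fexp t - weight s 1)).2
    refine ih (s := shiftA s) (Fexp_nonneg hx) (fun k => hw (k + 1)) ?_
    have hw₀ : weight s 1 ≤ x := hw 0
    linarith [Fexp_strictMono.monotone ht, Fexp_add_one_le x]

lemma minPot_le_of_weight_le (hx : 0 ≤ x) (hw : ∀ k, weight s (k + 1) ≤ Fexp^[k] x) :
    minPot s ≤ x + 1 :=
  minPot_le (mem_admissible_of_weight_le hx hw le_rfl)

lemma ofReal_lt_tS_shiftA_iterate_iff (h : (admissible s).Nonempty) (ht : 0 ≤ t) (n : ℕ) :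
    ENNReal.ofReal t < tS (shiftA^[n] s) ↔ t < minPot (shiftA^[n] s) := by
  rw [tS_eq_ofReal_minPot (admissible_shiftA_iterate_nonempty h n),
    ENNReal.ofReal_lt_ofReal_iff_of_nonneg ht]

lemma mk_minPot_mem_Xset_iff (h : (admissible s).Nonempty) :
    (s, minPot s) ∈ Xset ↔ Tendsto (fun n => minPot (shiftA^[n] s)) atTop atTop := by
  simp only [Xset, Set.mem_ofPred_eq, Fmod_iterate_mk_minPot h]
  exact and_iff_right (isLeast_minPot h).1

theorem not_tendsto_minPot_shiftA_iterate_iff (h : (admissible s).Nonempty) :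
    ¬ Tendsto (fun n => minPot (shiftA^[n] s)) atTop atTop ↔
      ∃ x, 0 ≤ x ∧ ∃ᶠ m in atTop, ∀ k, weight (shiftA^[m] s) (k + 1) ≤ Fexp^[k] x := by
  constructor
  · intro hnt
    obtain ⟨M, hM⟩ : ∃ M, ∃ᶠ m in atTop, minPot (shiftA^[m] s) < M := by
      simpa only [tendsto_atTop, not_forall, Filter.not_eventually, not_le] using hnt
    refine ⟨Fexp (max M 0), Fexp_nonneg (le_max_right _ _), hM.mono fun m hm k => ?_⟩
    calc weight (shiftA^[m] s) (k + 1)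
        ≤ Fexp^[k + 1] (minPot (shiftA^[m] s)) :=
          weight_succ_le_Fexp_iterate
            (isLeast_minPot (admissible_shiftA_iterate_nonempty h m)).1 k
      _ ≤ Fexp^[k + 1] (max M 0) :=
          (Fexp_strictMono.iterate _).monotone (hm.le.trans (le_max_left _ _))
      _ = Fexp^[k] (Fexp (max M 0)) := iterate_succ_apply _ _ _
  · rintro ⟨x, hx, hfreq⟩ htend
    have hle : ∃ᶠ m in atTop, minPot (shiftA^[m] s) ≤ x + 1 :=
      hfreq.mono fun m hm => minPot_le_of_weight_le hx hm
    obtain ⟨m, h1, h2⟩ := (hle.and_eventually (htend.eventually_gt_atTop (x + 1))).exists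
    linarith

lemma Fexp_iterate_le_minPot_of_frequently (h : (admissible s).Nonempty)
    (hx : ∃ᶠ m in atTop, Fexp^[m + 1] x ≤ weight s (m + 1)) (j : ℕ) :
    Fexp^[j] x ≤ minPot (shiftA^[j] s) := by
  refine Nat.decreasing_induction_of_infinite (P := fun j => Fexp^[j] x ≤ minPot (shiftA^[j] s))
    (fun n hn => ?_) ?_ j
  · refine Fexp_strictMono.le_iff_le.1 ?_
    rw [← iterate_succ_apply' Fexp]
    exact hn.trans (minPot_shiftA_iterate_succ_le h n)
  · rw [← Nat.frequently_atTop_iff_infinite]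
    refine hx.mono fun m hm => Fexp_strictMono.le_iff_le.1 ?_
    rw [← iterate_succ_apply' Fexp]
    exact hm.trans (weight_succ_le_Fexp_minPot h m)

lemma exists_frequently_of_Fexp_iterate_lt_minPot (hx : 0 < x)
    (hlt : ∀ j, Fexp^[j] x < minPot (shiftA^[j] s)) :
    ∃ y, 0 < y ∧ ∃ᶠ m in atTop, Fexp^[m + 1] y ≤ weight s (m + 1) := by
  set y := Real.log (1 + x / 2)
  have hy : 0 < y := Real.log_pos (by linarith)
  have hFy : Fexp y = x / 2 := by
    rw [Fexp, Real.exp_log (by linarith)]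
    ring
  refine ⟨y, hy, fun hev => ?_⟩
  obtain ⟨N₀, hN₀⟩ := eventually_atTop.1 hev
  have hbound : ∀ N ≥ N₀, minPot (shiftA^[N] s) ≤ Fexp^[N] (Fexp y) + 1 := by
    intro N hN
    refine minPot_le_of_weight_le (Fexp_iterate_nonneg (Fexp_nonneg hy.le) N) fun k => ?_
    rw [weight_shiftA_iterate, ← iterate_succ_apply, ← iterate_add_apply, Nat.add_right_comm]
    exact (not_le.1 (hN₀ (k + N) (by omega))).le
  have hgap := (tendsto_Fexp_iterate_sub (Fexp_nonneg hy.le)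
    (hFy ▸ half_lt_self hx)).eventually_gt_atTop 1
  obtain ⟨N, hgapN, hN⟩ := (hgap.and (eventually_ge_atTop N₀)).exists
  linarith [hbound N hN, hlt N]

theorem exists_frequently_Fexp_iterate_le_weight_iff (h : (admissible s).Nonempty) :
    (∃ x, 0 < x ∧ ∃ᶠ m in atTop, Fexp^[m + 1] x ≤ weight s (m + 1)) ↔
      ∃ x, 0 < x ∧ ∀ j, Fexp^[j] x < minPot (shiftA^[j] s) := by
  constructor
  · rintro ⟨x, hx, hfreq⟩
    refine ⟨x / 2, half_pos hx, fun j => ?_⟩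
    exact ((Fexp_strictMono.iterate j) (half_lt_self hx)).trans_le
      (Fexp_iterate_le_minPot_of_frequently h hfreq j)
  · rintro ⟨x, hx, hlt⟩
    exact exists_frequently_of_Fexp_iterate_lt_minPot hx hlt

lemma infinite_setOf_weight_le_iff (s : Addr) (x : ℝ) :
    {n : ℕ | ∀ k : ℕ, 1 ≤ k → weight s (n + k - 1) ≤ Fexp^[k - 1] x}.Infinite ↔
      ∃ᶠ m in atTop, ∀ k, weight (shiftA^[m] s) (k + 1) ≤ Fexp^[k] x := by
  rw [infinite_setOf_iff_frequently_add 1]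
  refine frequently_congr (.of_forall fun m => ⟨fun h k => ?_, fun h k hk => ?_⟩)
  · rw [weight_shiftA_iterate]
    convert h (k + 1) (by omega) using 2 <;> omega
  · obtain ⟨k, rfl⟩ : ∃ k', k = k' + 1 := ⟨k - 1, by omega⟩
    have hk := h k
    rw [weight_shiftA_iterate] at hk
    convert hk using 2 <;> omega

lemma infinite_setOf_Fexp_iterate_le_weight_iff (s : Addr) (x : ℝ) :
    {n : ℕ | 1 ≤ n ∧ Fexp^[n - 1] x ≤ weight s (n - 1)}.Infinite ↔
      ∃ᶠ m in atTop, Fexp^[m + 1] x ≤ weight s (m + 1) := by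
  rw [infinite_setOf_iff_frequently_add 2]
  simp

end Addr

open Addr

/-- **Properties of exponentially bounded addresses**: let `s` satisfy `t_s < ∞`. Then
(i) `s` is slow (`(s,t_s) ∉ X`) iff there are `x ≥ 0` and infinitely many `n ≥ 0` with
`2π |s_{n+k}| ≤ F^{k-1}(x)` for all `k ≥ 1`; (ii) `s` has positive minimal potential
(`∃ x > 0` with `2π |s_n| ≥ F^{n-1}(x)` for infinitely many `n ≥ 1`) iff there is `x > 0`
with `t_{σ^j(s)} > F^j(x)` for all `j ≥ 0`.
(With 0-based indexing, the paper's `s_m` is `ofLex s (m-1)`.) -/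
theorem slow_and_minimal_potential (s : Addr) (hs : tS s ≠ ⊤) :
    ((s, (tS s).toReal) ∉ Xset ↔
      ∃ x : ℝ, 0 ≤ x ∧ {n : ℕ | ∀ k : ℕ, 1 ≤ k →
        2 * Real.pi * |((ofLex s (n + k - 1) : ℤ) : ℝ)| ≤ Fexp^[k - 1] x}.Infinite) ∧
    ((∃ x : ℝ, 0 < x ∧ {n : ℕ | 1 ≤ n ∧
        Fexp^[n - 1] x ≤ 2 * Real.pi * |((ofLex s (n - 1) : ℤ) : ℝ)|}.Infinite) ↔
      ∃ x : ℝ, 0 < x ∧ ∀ j : ℕ,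
        ENNReal.ofReal (Fexp^[j] x) < tS (shiftA^[j] s)) := by
  have h := admissible_nonempty_of_tS_ne_top hs
  rw [toReal_tS h, mk_minPot_mem_Xset_iff h]
  constructor
  · refine (not_tendsto_minPot_shiftA_iterate_iff h).trans ?_
    exact exists_congr fun x => and_congr_right fun _ => (infinite_setOf_weight_le_iff s x).symm
  · refine (exists_congr fun x => and_congr_right fun _ =>
      infinite_setOf_Fexp_iterate_le_weight_iff s x).trans
        ((exists_frequently_Fexp_iterate_le_weight_iff h).trans ?_)
    exact exists_congr fun x => and_congr_right fun hx => forall_congr' fun j =>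
      (ofReal_lt_tS_shiftA_iterate_iff h (Fexp_iterate_nonneg hx.le j) j).symm
end
end

section
/- For every k ≥ 0 and every (s,t) ∈ Y: the point 𝔤_k(𝓕(s,t)) − κ does not lie in the real ray (−∞, 0] (so 𝔤_{k+1}(s,t) is obtained by applying the principal logarithm away from its branch cut), |Re(𝔤_k(s,t)) − t| < 2, and |𝔤_k(s,t) − (t + 2πi·s₁)| < π + 2. -/
open Filter Topology ENNReal

noncomputable section

/-- The constant `Q(K) = max(log(4(K+π+3)), π+2)`. -/
def Qconst (K : ℝ) : ℝ := max (Real.log (4 * (K + Real.pi + 3))) (Real.pi + 2)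

/-- `Y_Q = {(s,t) ∈ X̄ : T(𝓕ⁿ(s,t)) ≥ Q for all n}`. -/
def Yset (Q : ℝ) : Set (Addr × ℝ) :=
  {p | p ∈ Xbar ∧ ∀ n : ℕ, Q ≤ (Fmod^[n] p).2}

/-- `Z(s,t) = t + 2πi s₁`. -/
def Zc (p : Addr × ℝ) : ℂ :=
  (p.2 : ℂ) + 2 * Real.pi * Complex.I * ((ofLex p.1 0 : ℤ) : ℂ)

/-- The approximating maps `𝔤_k`: `𝔤₀ = Z` and
`𝔤_{k+1}(s,t) = Log(𝔤_k(𝓕(s,t)) - κ) + 2πi s₁`, with `Log` the principal logarithm. -/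
def gmap (κ : ℂ) : ℕ → Addr × ℝ → ℂ
  | 0 => Zc
  | k + 1 => fun p =>
      Complex.log (gmap κ k (Fmod p) - κ) + 2 * Real.pi * Complex.I * ((ofLex p.1 0 : ℤ) : ℂ)

/-!
Induction on `k`: if `𝔤_k(𝓕(s,t))` lies within `π + 2` of `Z(𝓕(s,t)) = T + 2πi s₂`, where
`T + 2π|s₂| = e^t - 1`, then `w = 𝔤_k(𝓕(s,t)) - κ` differs from `Z(𝓕(s,t))` by at most
`K + π + 2`, which is small against `e^t ≥ 4(K + π + 3)`. Whichever of `T` and `2π|s₂|` is the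
larger is at least `(e^t - 1)/2`, so `Re w > 0` or `Im w ≠ 0`, and `e^t/5 ≤ |w| ≤ 5e^t`.
Since `log 5 < 2`, `Log w` has real part within `2` of `t` and imaginary part in `[-π, π]`, and
adding `2πi s₁` gives `𝔤_{k+1}(s,t)` within `π + 2` of `Z(s,t)`.
-/

lemma add_mem_slitPlane_and_le_norm {z ε : ℂ} {R : ℝ} (hε : ‖ε‖ ≤ R)
    (hR : R < (z.re + |z.im|) / 2) :
    z + ε ∈ Complex.slitPlane ∧ (z.re + |z.im|) / 2 - R ≤ ‖z + ε‖ := by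
  rcases le_total |z.im| z.re with him | him
  · have hre : (z.re + |z.im|) / 2 - R ≤ (z + ε).re := by
      have := neg_le_of_abs_le ((Complex.abs_re_le_norm ε).trans hε)
      rw [Complex.add_re]
      linarith
    exact ⟨Complex.mem_slitPlane_iff.2 (Or.inl (by linarith)), hre.trans (Complex.re_le_norm _)⟩
  · have him' : (z.re + |z.im|) / 2 - R ≤ |(z + ε).im| := by
      have h : |z.im| ≤ |z.im + ε.im| + |ε.im| := by simpa using abs_sub (z.im + ε.im) ε.im
      rw [Complex.add_im]
      linarith [(Complex.abs_im_le_norm ε).trans hε]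
    refine ⟨Complex.mem_slitPlane_iff.2 (Or.inr fun h => ?_),
      him'.trans (Complex.abs_im_le_norm _)⟩
    rw [h, abs_zero] at him'
    linarith

lemma abs_log_sub_lt_two {x t : ℝ} (h₁ : Real.exp t / 5 ≤ x) (h₂ : x ≤ 5 * Real.exp t) :
    |Real.log x - t| < 2 := by
  have hexp : 5 < Real.exp 2 := by
    have : Real.exp 2 = Real.exp 1 * Real.exp 1 := by rw [← Real.exp_add]; norm_num
    nlinarith [Real.exp_one_gt_d9]
  have hx : 0 < x := lt_of_lt_of_le (by positivity) h₁
  rw [abs_sub_lt_iff, sub_lt_iff_lt_add, sub_lt_comm, Real.log_lt_iff_lt_exp hx,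
    Real.lt_log_iff_exp_lt hx, Real.exp_add, Real.exp_sub]
  constructor
  · nlinarith [Real.exp_pos t]
  · rw [div_lt_iff₀ (Real.exp_pos 2)]
    nlinarith [Real.exp_pos t]

lemma norm_log_sub_ofReal_lt {w : ℂ} {t : ℝ} (h : |Real.log ‖w‖ - t| < 2) :
    ‖Complex.log w - t‖ < Real.pi + 2 := by
  calc ‖Complex.log w - t‖ ≤ |(Complex.log w - t).re| + |(Complex.log w - t).im| :=
        Complex.norm_le_abs_re_add_abs_im _
    _ = |Real.log ‖w‖ - t| + |w.arg| := by simp [Complex.log_re, Complex.log_im]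
    _ < Real.pi + 2 := by linarith [Complex.abs_arg_le_pi w]

lemma le_exp_Qconst {K : ℝ} (hK : 0 ≤ K) : 4 * (K + Real.pi + 3) ≤ Real.exp (Qconst K) := by
  rw [← Real.exp_log (by positivity : 0 < 4 * (K + Real.pi + 3))]
  exact Real.exp_le_exp.2 (le_max_left _ _)

lemma Fmod_mem_Yset {Q : ℝ} {p : Addr × ℝ} (hp : p ∈ Yset Q) : Fmod p ∈ Yset Q :=
  ⟨fun n => by simpa only [Function.iterate_succ_apply] using hp.1 (n + 1),
    fun n => by simpa only [Function.iterate_succ_apply] using hp.2 (n + 1)⟩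

lemma Zc_re (p : Addr × ℝ) : (Zc p).re = p.2 := by simp [Zc]

lemma Zc_Fmod_re_add_abs_im (p : Addr × ℝ) :
    (Zc (Fmod p)).re + |(Zc (Fmod p)).im| = Real.exp p.2 - 1 := by
  simp [Zc, Fmod, Fexp, shiftA, abs_mul, abs_of_pos Real.pi_pos, Complex.exp_ofReal_re]

lemma sub_mem_slitPlane_of_norm_sub_Zc_Fmod_lt {κ g : ℂ} {K : ℝ} {p : Addr × ℝ}
    (hκ : ‖κ‖ ≤ K) (hp : p ∈ Yset (Qconst K)) (hg : ‖g - Zc (Fmod p)‖ < Real.pi + 2) :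
    g - κ ∈ Complex.slitPlane ∧ Real.exp p.2 / 5 ≤ ‖g - κ‖ ∧ ‖g - κ‖ ≤ 5 * Real.exp p.2 := by
  have hK : 0 ≤ K := (norm_nonneg κ).trans hκ
  have ht : 4 * (K + Real.pi + 3) ≤ Real.exp p.2 :=
    (le_exp_Qconst hK).trans (Real.exp_le_exp.2 (by simpa using hp.2 0))
  have hsum := Zc_Fmod_re_add_abs_im p
  have hre : 0 ≤ (Zc (Fmod p)).re := by simpa [Zc_re] using hp.1 1
  have hε : ‖g - Zc (Fmod p) - κ‖ ≤ K + Real.pi + 2 := by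
    linarith [norm_sub_le (g - Zc (Fmod p)) κ]
  have hw : g - κ = Zc (Fmod p) + (g - Zc (Fmod p) - κ) := by ring
  have hupper : ‖g - κ‖ ≤ Real.exp p.2 - 1 + (K + Real.pi + 2) := by
    rw [hw, ← hsum, ← abs_of_nonneg hre]
    linarith [norm_add_le (Zc (Fmod p)) (g - Zc (Fmod p) - κ),
      Complex.norm_le_abs_re_add_abs_im (Zc (Fmod p))]
  obtain ⟨hslit, hlower⟩ :=
    add_mem_slitPlane_and_le_norm (z := Zc (Fmod p)) hε (by linarith [Real.pi_pos])
  rw [← hw] at hslit hlower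
  rw [hsum] at hlower
  exact ⟨hslit, by linarith [Real.pi_pos], by linarith [Real.pi_pos]⟩

lemma gmap_succ_bounds {κ : ℂ} {k : ℕ} {p : Addr × ℝ}
    (h : |Real.log ‖gmap κ k (Fmod p) - κ‖ - p.2| < 2) :
    |(gmap κ (k + 1) p).re - p.2| < 2 ∧ ‖gmap κ (k + 1) p - Zc p‖ < Real.pi + 2 := by
  have hsub : gmap κ (k + 1) p - Zc p = Complex.log (gmap κ k (Fmod p) - κ) - p.2 := by
    simp only [gmap, Zc]
    ring
  refine ⟨by simpa [gmap, Complex.log_re] using h, ?_⟩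
  rw [hsub]
  exact norm_log_sub_ofReal_lt h

lemma gmap_near_Zc {κ : ℂ} {K : ℝ} (hκ : ‖κ‖ ≤ K) (k : ℕ) :
    ∀ p ∈ Yset (Qconst K),
      |(gmap κ k p).re - p.2| < 2 ∧ ‖gmap κ k p - Zc p‖ < Real.pi + 2 := by
  induction k with
  | zero =>
    intro p _
    simp only [gmap, Zc_re, sub_self, abs_zero, norm_zero]
    exact ⟨two_pos, by linarith [Real.pi_pos]⟩
  | succ k ih =>
    intro p hp
    obtain ⟨-, hlower, hupper⟩ :=
      sub_mem_slitPlane_of_norm_sub_Zc_Fmod_lt hκ hp (ih _ (Fmod_mem_Yset hp)).2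
    exact gmap_succ_bounds (abs_log_sub_lt_two hlower hupper)

theorem gmap_bounded_general (κ : ℂ) (K : ℝ)
    (hκ : ‖κ‖ ≤ K) (k : ℕ) (p : Addr × ℝ) (hp : p ∈ Yset (Qconst K)) :
    gmap κ k (Fmod p) - κ ∉ {z : ℂ | z.im = 0 ∧ z.re ≤ 0} ∧
    |(gmap κ k p).re - p.2| < 2 ∧
    ‖gmap κ k p - Zc p‖ < Real.pi + 2 := by
  obtain ⟨hslit, -⟩ :=
    sub_mem_slitPlane_of_norm_sub_Zc_Fmod_lt hκ hp (gmap_near_Zc hκ k _ (Fmod_mem_Yset hp)).2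
  refine ⟨fun hcut => ?_, gmap_near_Zc hκ k p hp⟩
  rcases Complex.mem_slitPlane_iff.1 hslit with hre | him
  exacts [hcut.2.not_gt hre, him hcut.1]

/-- **Bound on `𝔤_k`** (Lemma 4.1): for all `k` and `(s,t) ∈ Y`, the point
`𝔤_k(𝓕(s,t)) - κ` avoids the branch cut `(-∞,0]` (so `𝔤_{k+1}(s,t)` is given by the
principal logarithm away from its branch cut), `|Re 𝔤_k(s,t) - t| < 2`, and
`|𝔤_k(s,t) - Z(s,t)| < π + 2`. -/
theorem gmap_bounded (κ : ℂ) (K : ℝ) (hK : 2 * Real.pi + 6 < K)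
    (hκ : ‖κ‖ ≤ K) (k : ℕ) (p : Addr × ℝ) (hp : p ∈ Yset (Qconst K)) :
    gmap κ k (Fmod p) - κ ∉ {z : ℂ | z.im = 0 ∧ z.re ≤ 0} ∧
    |(gmap κ k p).re - p.2| < 2 ∧
    ‖gmap κ k p - Zc p‖ < Real.pi + 2 :=
  gmap_bounded_general κ K hκ k p hp
end
end
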